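/- arXiv:1909.00508 — 2 statements merged into one kernel-verified Lean document; each statement's English description precedes it below -/
import Mathlib

section
/- (Theorem 3, existence of an efficient Nash equilibrium under the congestion-free condition) Suppose Assumption 2 holds and (SPP-U) has an optimal solution (y*, θ*) with multipliers (λ*, γ*) satisfying its KKT conditions such that no line-limit constraint is binding at θ* in either stage or any scenario, i.e., B_ij(θ*_{1,i} − θ*_{1,j}) < f^max_ij and B_ij(θ*_{2,i}(w) − θ*_{2,j}(w)) < f^max_ij for all i, j, w, and γ* = 0 (the congestion-free condition; the nodal prices λ*_{1,i} and λ*_{2,i}(w) are then uniform across nodes i). Define the bid profile b* in which every generator and every LSE at node i bids b^G_{1,k} = b^L_{1,k} = λ*_{1,i} and b^G_{2,k}(w) = b^L_{2,k}(w) = λ*_{2,i}(w). Then b* is an efficient Nash equilibrium of the dynamic economic dispatch game: (y*, θ*) is an optimal solution of (DED) under b*, and for every market participant (i,k), every unilateral deviation of that participant's bid vector (all other bids fixed at b*), and every primal–dual pair ((y, θ), (λ, γ)) satisfying the KKT conditions of the deviated (DED), the deviating participant's payoff evaluated at (y, λ) is at most its payoff evaluated at (y*, λ*). -/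
open scoped BigOperators

/-- A point of the utility-reformulated planner's problem (SPP-U) / of the dispatch
linear program (DED): generations, consumptions and phase angles in both stages. -/
structure UPoint (N G L W : Type) where
  yG1 : G → ℝ
  yG2 : G → W → ℝ
  yL1 : L → ℝ
  yL2 : L → W → ℝ
  th1 : N → ℝ
  th2 : W → N → ℝ

/-- Multipliers for (SPP-U) and for (DED): nodal prices and line-limit multipliers. -/
structure UMult (N W : Type) where
  lam1 : N → ℝ
  lam2 : W → N → ℝ
  gam1 : N → N → ℝ
  gam2 : W → N → N → ℝ

/-- A bid profile of the dynamic economic dispatch game. -/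
structure Bids (G L W : Type) where
  bG1 : G → ℝ
  bG2 : G → W → ℝ
  bL1 : L → ℝ
  bL2 : L → W → ℝ

/-- The LSE utility u_{i,k}(y₁,y₂,w): the negative of the minimal combined
demand-response and blackout cost needed to cover residual demand, given total
secured energy s = y₁ + y₂. -/
noncomputable def uVal (cdr cbo : ℝ → ℝ) (Dk rkw : ℝ) (s : ℝ) : ℝ :=
  -sInf {c : ℝ | ∃ x z : ℝ, 0 ≤ x ∧ 0 ≤ z ∧ Dk - rkw ≤ s + x + z ∧ c = cdr x + cbo z}

/-- `g` is a supergradient of the concave function `f` at `s`. -/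
def IsSupergrad (f : ℝ → ℝ) (s g : ℝ) : Prop :=
  ∀ t : ℝ, f t ≤ f s + g * (t - s)

variable {N G L W : Type} [Fintype N] [Fintype G] [Fintype L] [Fintype W] [DecidableEq N]

/-- Feasibility for (SPP-U) and (DED): nonnegativity, nodal balance in both stages,
and line limits in both stages. -/
def UFeasible (nodeG : G → N) (nodeL : L → N) (B fmax : N → N → ℝ)
    (P : UPoint N G L W) : Prop :=
  (∀ k, 0 ≤ P.yG1 k) ∧ (∀ k w, 0 ≤ P.yG2 k w) ∧
  (∀ k, 0 ≤ P.yL1 k) ∧ (∀ k w, 0 ≤ P.yL2 k w) ∧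
  (∀ i, (∑ k, if nodeG k = i then P.yG1 k else 0)
        - (∑ k, if nodeL k = i then P.yL1 k else 0)
      = ∑ j, B i j * (P.th1 i - P.th1 j)) ∧
  (∀ (w : W) (i : N), (∑ k, if nodeG k = i then P.yG2 k w else 0)
        - (∑ k, if nodeL k = i then P.yL2 k w else 0)
      = ∑ j, B i j * (P.th2 w i - P.th2 w j - P.th1 i + P.th1 j)) ∧
  (∀ i j, B i j * (P.th1 i - P.th1 j) ≤ fmax i j) ∧
  (∀ (w : W) (i j : N), B i j * (P.th2 w i - P.th2 w j) ≤ fmax i j)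

/-- Objective of (SPP-U): expected LSE utilities minus generation costs. -/
noncomputable def UObj (p : W → ℝ)
    (c1 c2 : G → ℝ → ℝ) (cdr cbo : L → ℝ → ℝ) (D : L → ℝ) (ren : L → W → ℝ)
    (P : UPoint N G L W) : ℝ :=
  (∑ k, ∑ w, uVal (cdr k) (cbo k) (D k) (ren k w) (P.yL1 k + P.yL2 k w) * p w)
    - ∑ k, (c1 k (P.yG1 k) + ∑ w, c2 k (P.yG2 k w) * p w)

/-- KKT conditions of (SPP-U). -/
def UKKT (nodeG : G → N) (nodeL : L → N) (B fmax : N → N → ℝ)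
    (p : W → ℝ) (c1 c2 : G → ℝ → ℝ) (cdr cbo : L → ℝ → ℝ)
    (D : L → ℝ) (ren : L → W → ℝ)
    (P : UPoint N G L W) (M : UMult N W) : Prop :=
  UFeasible nodeG nodeL B fmax P ∧
  (∀ i j, 0 ≤ M.gam1 i j) ∧ (∀ (w : W) (i j : N), 0 ≤ M.gam2 w i j) ∧
  (∀ k : G, M.lam1 (nodeG k) ≤ deriv (c1 k) (P.yG1 k)) ∧
  (∀ k : G, 0 < P.yG1 k → deriv (c1 k) (P.yG1 k) = M.lam1 (nodeG k)) ∧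
  (∀ (k : G) (w : W), M.lam2 w (nodeG k) ≤ deriv (c2 k) (P.yG2 k w)) ∧
  (∀ (k : G) (w : W), 0 < P.yG2 k w → deriv (c2 k) (P.yG2 k w) = M.lam2 w (nodeG k)) ∧
  (∀ k : L, ∃ g : W → ℝ,
      (∀ w, IsSupergrad (uVal (cdr k) (cbo k) (D k) (ren k w))
          (P.yL1 k + P.yL2 k w) (g w)) ∧
      (∑ w, g w * p w ≤ M.lam1 (nodeL k)) ∧
      (0 < P.yL1 k → M.lam1 (nodeL k) = ∑ w, g w * p w) ∧
      (∀ w, g w ≤ M.lam2 w (nodeL k)) ∧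
      (∀ w, 0 < P.yL2 k w → M.lam2 w (nodeL k) = g w)) ∧
  (∀ i, ∑ j, B i j * (M.lam1 i - M.lam1 j
        - (∑ w, (M.lam2 w i - M.lam2 w j) * p w) + M.gam1 i j - M.gam1 j i) = 0) ∧
  (∀ (w : W) (i : N),
      ∑ j, B i j * (M.lam2 w i - M.lam2 w j + M.gam2 w i j - M.gam2 w j i) = 0) ∧
  (∀ i j, M.gam1 i j * (B i j * (P.th1 i - P.th1 j) - fmax i j) = 0) ∧
  (∀ (w : W) (i j : N), M.gam2 w i j * (B i j * (P.th2 w i - P.th2 w j) - fmax i j) = 0)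

/-- Objective of the bid-based dispatch linear program (DED). -/
noncomputable def DEDObj (p : W → ℝ) (b : Bids G L W) (P : UPoint N G L W) : ℝ :=
  (∑ k, b.bL1 k * P.yL1 k) + (∑ w, (∑ k, b.bL2 k w * P.yL2 k w) * p w)
    - ∑ k, (b.bG1 k * P.yG1 k + ∑ w, b.bG2 k w * P.yG2 k w * p w)

/-- Primal–dual (LP KKT) conditions of (DED) under bid profile `b`. -/
def DEDKKT (nodeG : G → N) (nodeL : L → N) (B fmax : N → N → ℝ)
    (p : W → ℝ) (b : Bids G L W)
    (P : UPoint N G L W) (M : UMult N W) : Prop :=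
  UFeasible nodeG nodeL B fmax P ∧
  (∀ i j, 0 ≤ M.gam1 i j) ∧ (∀ (w : W) (i j : N), 0 ≤ M.gam2 w i j) ∧
  (∀ k : G, M.lam1 (nodeG k) ≤ b.bG1 k) ∧
  (∀ k : G, 0 < P.yG1 k → b.bG1 k = M.lam1 (nodeG k)) ∧
  (∀ (k : G) (w : W), M.lam2 w (nodeG k) ≤ b.bG2 k w) ∧
  (∀ (k : G) (w : W), 0 < P.yG2 k w → b.bG2 k w = M.lam2 w (nodeG k)) ∧
  (∀ k : L, b.bL1 k ≤ M.lam1 (nodeL k)) ∧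
  (∀ k : L, 0 < P.yL1 k → M.lam1 (nodeL k) = b.bL1 k) ∧
  (∀ (k : L) (w : W), b.bL2 k w ≤ M.lam2 w (nodeL k)) ∧
  (∀ (k : L) (w : W), 0 < P.yL2 k w → M.lam2 w (nodeL k) = b.bL2 k w) ∧
  (∀ i, ∑ j, B i j * (M.lam1 i - M.lam1 j
        - (∑ w, (M.lam2 w i - M.lam2 w j) * p w) + M.gam1 i j - M.gam1 j i) = 0) ∧
  (∀ (w : W) (i : N),
      ∑ j, B i j * (M.lam2 w i - M.lam2 w j + M.gam2 w i j - M.gam2 w j i) = 0) ∧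
  (∀ i j, M.gam1 i j * (B i j * (P.th1 i - P.th1 j) - fmax i j) = 0) ∧
  (∀ (w : W) (i j : N), M.gam2 w i j * (B i j * (P.th2 w i - P.th2 w j) - fmax i j) = 0)

/-- Expected payoff of generator `k` at a primal–dual pair of (DED). -/
noncomputable def genPayoff (nodeG : G → N) (p : W → ℝ) (c1 c2 : G → ℝ → ℝ)
    (k : G) (P : UPoint N G L W) (M : UMult N W) : ℝ :=
  M.lam1 (nodeG k) * P.yG1 k - c1 k (P.yG1 k)
    + ∑ w, (M.lam2 w (nodeG k) * P.yG2 k w - c2 k (P.yG2 k w)) * p w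

/-- Expected payoff of LSE `k` at a primal–dual pair of (DED). -/
noncomputable def lsePayoff (nodeL : L → N) (p : W → ℝ) (cdr cbo : L → ℝ → ℝ)
    (D : L → ℝ) (ren : L → W → ℝ)
    (k : L) (P : UPoint N G L W) (M : UMult N W) : ℝ :=
  -(M.lam1 (nodeL k)) * P.yL1 k
    + ∑ w, (uVal (cdr k) (cbo k) (D k) (ren k w) (P.yL1 k + P.yL2 k w)
        - M.lam2 w (nodeL k) * P.yL2 k w) * p w

/-- All bids in a bid profile are nonnegative scalars. -/
def NonnegBids (b : Bids G L W) : Prop :=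
  (∀ k, 0 ≤ b.bG1 k) ∧ (∀ k w, 0 ≤ b.bG2 k w) ∧
  (∀ k, 0 ≤ b.bL1 k) ∧ (∀ k w, 0 ≤ b.bL2 k w)

/-- Unilateral deviation by generator `k0`: all bids other than generator `k0`'s agree
with `b`, and the deviated profile consists of nonnegative bids. -/
def GenDeviation (b b' : Bids G L W) (k0 : G) : Prop :=
  NonnegBids b' ∧ (∀ k : G, k ≠ k0 → b'.bG1 k = b.bG1 k) ∧
  (∀ (k : G) (w : W), k ≠ k0 → b'.bG2 k w = b.bG2 k w) ∧
  b'.bL1 = b.bL1 ∧ b'.bL2 = b.bL2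

/-- Unilateral deviation by LSE `k0`: all bids other than LSE `k0`'s agree with `b`,
and the deviated profile consists of nonnegative bids. -/
def LSEDeviation (b b' : Bids G L W) (k0 : L) : Prop :=
  NonnegBids b' ∧ (∀ k : L, k ≠ k0 → b'.bL1 k = b.bL1 k) ∧
  (∀ (k : L) (w : W), k ≠ k0 → b'.bL2 k w = b.bL2 k w) ∧
  b'.bG1 = b.bG1 ∧ b'.bG2 = b.bG2

/-- Assumption 1: all cost functions are strictly convex, (strictly) increasing,
differentiable and nonnegative on [0,∞). -/
def Assumption1 (c1 c2 : G → ℝ → ℝ) (cdr cbo : L → ℝ → ℝ) : Prop :=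
  (∀ k : G, StrictConvexOn ℝ (Set.Ici (0:ℝ)) (c1 k) ∧ StrictMonoOn (c1 k) (Set.Ici (0:ℝ)) ∧
      Differentiable ℝ (c1 k) ∧ ∀ y ∈ Set.Ici (0:ℝ), 0 ≤ c1 k y) ∧
  (∀ k : G, StrictConvexOn ℝ (Set.Ici (0:ℝ)) (c2 k) ∧ StrictMonoOn (c2 k) (Set.Ici (0:ℝ)) ∧
      Differentiable ℝ (c2 k) ∧ ∀ y ∈ Set.Ici (0:ℝ), 0 ≤ c2 k y) ∧
  (∀ k : L, StrictConvexOn ℝ (Set.Ici (0:ℝ)) (cdr k) ∧ StrictMonoOn (cdr k) (Set.Ici (0:ℝ)) ∧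
      Differentiable ℝ (cdr k) ∧ ∀ y ∈ Set.Ici (0:ℝ), 0 ≤ cdr k y) ∧
  (∀ k : L, StrictConvexOn ℝ (Set.Ici (0:ℝ)) (cbo k) ∧ StrictMonoOn (cbo k) (Set.Ici (0:ℝ)) ∧
      Differentiable ℝ (cbo k) ∧ ∀ y ∈ Set.Ici (0:ℝ), 0 ≤ cbo k y)

/-- Assumption 2: (SPP-U) remains feasible in the absence of any one generator,
i.e. with that generator's output fixed to zero in either market stage. -/
def Assumption2 (nodeG : G → N) (nodeL : L → N) (B fmax : N → N → ℝ) : Prop :=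
  ∀ g0 : G, ∃ P : UPoint N G L W, UFeasible nodeG nodeL B fmax P ∧
    P.yG1 g0 = 0 ∧ ∀ w : W, P.yG2 g0 w = 0

/-- The efficient bid profile built from the (SPP-U) nodal prices. -/
def effBids (nodeG : G → N) (nodeL : L → N) (M : UMult N W) : Bids G L W :=
  ⟨fun k => M.lam1 (nodeG k), fun k w => M.lam2 w (nodeG k),
   fun k => M.lam1 (nodeL k), fun k w => M.lam2 w (nodeL k)⟩

set_option linter.unusedSectionVars false

/-! ### Auxiliary lemmas for Theorem 3 -/

lemma double_swap' (f : N → N → ℝ) : ∑ i, ∑ j, f i j = ∑ i, ∑ j, f j i :=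
  Finset.sum_comm

lemma double_rearrange' (B : N → N → ℝ) (hB : ∀ i j, B i j = B j i) (a b : N → ℝ) :
    ∑ i, ∑ j, B i j * a i * b j = ∑ i, ∑ j, B i j * a j * b i := by
  rw [Finset.sum_comm]
  exact Finset.sum_congr rfl fun x _ => Finset.sum_congr rfl fun y _ => by rw [hB]

lemma expand_flow' (B : N → N → ℝ) (u v : N → ℝ) :
    ∑ i, u i * ∑ j, B i j * (v i - v j)
      = (∑ i, ∑ j, B i j * u i * v i) - ∑ i, ∑ j, B i j * u i * v j := by
  simp only [Finset.mul_sum, ← Finset.sum_sub_distrib]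
  exact Finset.sum_congr rfl fun i _ => Finset.sum_congr rfl fun j _ => by ring

/-- The value of a weighted flow under stationarity and complementary slackness. -/
lemma flow_value' (B fmax : N → N → ℝ) (hB : ∀ i j, B i j = B j i)
    (θ μ : N → ℝ) (γ : N → N → ℝ)
    (hstat : ∀ i, ∑ j, B i j * (μ i - μ j + (γ i j - γ j i)) = 0)
    (hcomp : ∀ i j, γ i j * (B i j * (θ i - θ j) - fmax i j) = 0) :
    ∑ i, μ i * ∑ j, B i j * (θ i - θ j) = -∑ i, ∑ j, γ i j * fmax i j := by
  have h1 : ∑ i, μ i * ∑ j, B i j * (θ i - θ j)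
      = ∑ i, θ i * ∑ j, B i j * (μ i - μ j) := by
    rw [expand_flow', expand_flow', double_rearrange' B hB μ θ]
    congr 1
    · exact Finset.sum_congr rfl fun i _ => Finset.sum_congr rfl fun j _ => by ring
    · exact Finset.sum_congr rfl fun i _ => Finset.sum_congr rfl fun j _ => by ring
  have h2 : ∀ i, ∑ j, B i j * (μ i - μ j) = -∑ j, B i j * (γ i j - γ j i) := by
    intro i
    have h := hstat i
    have hsplit : ∑ j, B i j * (μ i - μ j + (γ i j - γ j i))
        = (∑ j, B i j * (μ i - μ j)) + ∑ j, B i j * (γ i j - γ j i) := by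
      rw [← Finset.sum_add_distrib]
      exact Finset.sum_congr rfl fun j _ => by ring
    rw [hsplit] at h; linarith
  have h3 : ∑ i, θ i * ∑ j, B i j * (γ i j - γ j i)
      = ∑ i, ∑ j, γ i j * (B i j * (θ i - θ j)) := by
    have e1 : ∑ i, θ i * ∑ j, B i j * (γ i j - γ j i)
        = (∑ i, ∑ j, B i j * θ i * γ i j) - ∑ i, ∑ j, B i j * θ i * γ j i := by
      simp only [Finset.mul_sum, ← Finset.sum_sub_distrib]
      exact Finset.sum_congr rfl fun i _ => Finset.sum_congr rfl fun j _ => by ring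
    have e2 : ∑ i, ∑ j, (B i j * θ i * γ j i : ℝ) = ∑ i, ∑ j, B i j * θ j * γ i j := by
      rw [double_swap' (fun i j => B i j * θ i * γ j i)]
      exact Finset.sum_congr rfl fun x _ => Finset.sum_congr rfl fun y _ => by rw [hB]
    rw [e1, e2, ← Finset.sum_sub_distrib]
    refine Finset.sum_congr rfl fun i _ => ?_
    rw [← Finset.sum_sub_distrib]
    exact Finset.sum_congr rfl fun j _ => by ring
  have h4 : ∀ i j, γ i j * (B i j * (θ i - θ j)) = γ i j * fmax i j := by
    intro i j; nlinarith [hcomp i j]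
  calc ∑ i, μ i * ∑ j, B i j * (θ i - θ j)
      = ∑ i, θ i * ∑ j, B i j * (μ i - μ j) := h1
    _ = ∑ i, θ i * -∑ j, B i j * (γ i j - γ j i) :=
        Finset.sum_congr rfl fun i _ => by rw [h2]
    _ = -∑ i, θ i * ∑ j, B i j * (γ i j - γ j i) := by simp [mul_neg]
    _ = -∑ i, ∑ j, γ i j * (B i j * (θ i - θ j)) := by rw [h3]
    _ = -∑ i, ∑ j, γ i j * fmax i j := by
        congr 1
        exact Finset.sum_congr rfl fun i _ => Finset.sum_congr rfl fun j _ => h4 i j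

lemma group_node' {K : Type} [Fintype K] (node : K → N) (lam : N → ℝ) (y : K → ℝ) :
    ∑ k, lam (node k) * y k = ∑ i, lam i * ∑ k, (if node k = i then y k else 0) := by
  symm
  calc ∑ i, lam i * ∑ k, (if node k = i then y k else 0)
      = ∑ i, ∑ k, (if node k = i then lam i * y k else 0) := by
        simp only [Finset.mul_sum, mul_ite, mul_zero]
    _ = ∑ k, ∑ i, (if node k = i then lam i * y k else 0) := Finset.sum_comm
    _ = ∑ k, lam (node k) * y k := Finset.sum_congr rfl fun k _ => by simp

lemma profit_max' (c : ℝ → ℝ) (hconv : StrictConvexOn ℝ (Set.Ici (0:ℝ)) c)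
    (hdiff : Differentiable ℝ c) (lam ystar y : ℝ) (hys : 0 ≤ ystar) (hy : 0 ≤ y)
    (hle : lam ≤ deriv c ystar) (heq : 0 < ystar → deriv c ystar = lam) :
    lam * y - c y ≤ lam * ystar - c ystar := by
  rcases lt_trichotomy y ystar with h | h | h
  · have hpos : 0 < ystar := lt_of_le_of_lt hy h
    have hlam : deriv c ystar = lam := heq hpos
    have hs : slope c y ystar ≤ deriv c ystar :=
      hconv.convexOn.slope_le_deriv (Set.mem_Ici.mpr hy) (Set.mem_Ici.mpr hys) h
        (hdiff ystar)
    rw [slope_def_field] at hs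
    rw [div_le_iff₀ (by linarith)] at hs
    nlinarith
  · rw [h]
  · have hs : deriv c ystar ≤ slope c ystar y :=
      hconv.convexOn.deriv_le_slope (Set.mem_Ici.mpr hys) (Set.mem_Ici.mpr hy) h
        (hdiff ystar)
    rw [slope_def_field] at hs
    rw [le_div_iff₀ (by linarith)] at hs
    nlinarith

/-- The central accounting identity: the value of a nodal-price-weighted net
consumption under balance, stationarity and complementary slackness. -/
lemma obj_identity (nodeG : G → N) (nodeL : L → N) (B fmax : N → N → ℝ)
    (hB : ∀ i j, B i j = B j i) (p : W → ℝ)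
    (P : UPoint N G L W) (M : UMult N W)
    (hbal1 : ∀ i, (∑ k, if nodeG k = i then P.yG1 k else 0)
        - (∑ k, if nodeL k = i then P.yL1 k else 0) = ∑ j, B i j * (P.th1 i - P.th1 j))
    (hbal2 : ∀ (w : W) (i : N), (∑ k, if nodeG k = i then P.yG2 k w else 0)
        - (∑ k, if nodeL k = i then P.yL2 k w else 0)
      = ∑ j, B i j * (P.th2 w i - P.th2 w j - P.th1 i + P.th1 j))
    (hstat1 : ∀ i, ∑ j, B i j * (M.lam1 i - M.lam1 j
        - (∑ w, (M.lam2 w i - M.lam2 w j) * p w) + M.gam1 i j - M.gam1 j i) = 0)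
    (hstat2 : ∀ (w : W) (i : N),
        ∑ j, B i j * (M.lam2 w i - M.lam2 w j + M.gam2 w i j - M.gam2 w j i) = 0)
    (hcomp1 : ∀ i j, M.gam1 i j * (B i j * (P.th1 i - P.th1 j) - fmax i j) = 0)
    (hcomp2 : ∀ (w : W) (i j : N),
        M.gam2 w i j * (B i j * (P.th2 w i - P.th2 w j) - fmax i j) = 0) :
    (∑ k, M.lam1 (nodeL k) * P.yL1 k)
      + (∑ w, (∑ k, M.lam2 w (nodeL k) * P.yL2 k w) * p w)
      - ∑ k, (M.lam1 (nodeG k) * P.yG1 k + ∑ w, M.lam2 w (nodeG k) * P.yG2 k w * p w)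
    = (∑ i, ∑ j, M.gam1 i j * fmax i j)
      + ∑ w, (∑ i, ∑ j, M.gam2 w i j * fmax i j) * p w := by
  have hsum2 : ∀ i j : N, ∑ w, (M.lam2 w i - M.lam2 w j) * p w
      = (∑ w, M.lam2 w i * p w) - ∑ w, M.lam2 w j * p w := by
    intro i j; rw [← Finset.sum_sub_distrib]
    exact Finset.sum_congr rfl fun w _ => by ring
  -- flow values
  have flow1 : ∑ i, (M.lam1 i - ∑ w, M.lam2 w i * p w) * ∑ j, B i j * (P.th1 i - P.th1 j)
      = -∑ i, ∑ j, M.gam1 i j * fmax i j := by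
    refine flow_value' B fmax hB P.th1 _ M.gam1 (fun i => ?_) hcomp1
    rw [← hstat1 i]
    exact Finset.sum_congr rfl fun j _ => by rw [hsum2 i j]; ring
  have flow2 : ∀ w, ∑ i, M.lam2 w i * ∑ j, B i j * (P.th2 w i - P.th2 w j)
      = -∑ i, ∑ j, M.gam2 w i j * fmax i j := by
    intro w
    refine flow_value' B fmax hB (P.th2 w) (M.lam2 w) (M.gam2 w) (fun i => ?_) (hcomp2 w)
    rw [← hstat2 w i]
    exact Finset.sum_congr rfl fun j _ => by ring
  -- grouping by node
  have grpL1 : ∑ k, M.lam1 (nodeL k) * P.yL1 k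
      = ∑ i, M.lam1 i * ∑ k, (if nodeL k = i then P.yL1 k else 0) := group_node' _ _ _
  have grpG1 : ∑ k, M.lam1 (nodeG k) * P.yG1 k
      = ∑ i, M.lam1 i * ∑ k, (if nodeG k = i then P.yG1 k else 0) := group_node' _ _ _
  have grpL2 : ∀ w, ∑ k, M.lam2 w (nodeL k) * P.yL2 k w
      = ∑ i, M.lam2 w i * ∑ k, (if nodeL k = i then P.yL2 k w else 0) :=
    fun w => group_node' _ _ _
  have grpG2 : ∀ w, ∑ k, M.lam2 w (nodeG k) * P.yG2 k w
      = ∑ i, M.lam2 w i * ∑ k, (if nodeG k = i then P.yG2 k w else 0) :=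
    fun w => group_node' _ _ _
  have hGsplit : ∑ k, (M.lam1 (nodeG k) * P.yG1 k + ∑ w, M.lam2 w (nodeG k) * P.yG2 k w * p w)
      = (∑ k, M.lam1 (nodeG k) * P.yG1 k)
        + ∑ w, (∑ k, M.lam2 w (nodeG k) * P.yG2 k w) * p w := by
    rw [Finset.sum_add_distrib]
    congr 1
    rw [Finset.sum_comm]
    exact Finset.sum_congr rfl fun w _ => by rw [Finset.sum_mul]
  -- net injections per node
  have net1 : ∀ i, (∑ k, if nodeL k = i then P.yL1 k else 0)
      - (∑ k, if nodeG k = i then P.yG1 k else 0)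
      = -∑ j, B i j * (P.th1 i - P.th1 j) := by
    intro i; have := hbal1 i; linarith
  have net2 : ∀ w i, (∑ k, if nodeL k = i then P.yL2 k w else 0)
      - (∑ k, if nodeG k = i then P.yG2 k w else 0)
      = (∑ j, B i j * (P.th1 i - P.th1 j)) - ∑ j, B i j * (P.th2 w i - P.th2 w j) := by
    intro w i
    have h := hbal2 w i
    have hs : ∑ j, B i j * (P.th2 w i - P.th2 w j - P.th1 i + P.th1 j)
        = (∑ j, B i j * (P.th2 w i - P.th2 w j)) - ∑ j, B i j * (P.th1 i - P.th1 j) := by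
      rw [← Finset.sum_sub_distrib]
      exact Finset.sum_congr rfl fun j _ => by ring
    rw [hs] at h; linarith
  -- assemble stage-one difference
  have step1 : (∑ i, M.lam1 i * ∑ k, (if nodeL k = i then P.yL1 k else 0))
      - (∑ i, M.lam1 i * ∑ k, (if nodeG k = i then P.yG1 k else 0))
      = -∑ i, M.lam1 i * ∑ j, B i j * (P.th1 i - P.th1 j) := by
    rw [← Finset.sum_sub_distrib, ← Finset.sum_neg_distrib]
    refine Finset.sum_congr rfl fun i _ => ?_
    rw [← mul_sub, net1 i]; ring
  have stepw : ∀ w, (∑ i, M.lam2 w i * ∑ k, (if nodeL k = i then P.yL2 k w else 0))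
      - (∑ i, M.lam2 w i * ∑ k, (if nodeG k = i then P.yG2 k w else 0))
      = (∑ i, M.lam2 w i * ∑ j, B i j * (P.th1 i - P.th1 j))
        - ∑ i, M.lam2 w i * ∑ j, B i j * (P.th2 w i - P.th2 w j) := by
    intro w
    rw [← Finset.sum_sub_distrib, ← Finset.sum_sub_distrib]
    refine Finset.sum_congr rfl fun i _ => ?_
    rw [← mul_sub, ← mul_sub, net2 w i]
  have exch : ∑ w, (∑ i, M.lam2 w i * ∑ j, B i j * (P.th1 i - P.th1 j)) * p w
      = ∑ i, (∑ w, M.lam2 w i * p w) * ∑ j, B i j * (P.th1 i - P.th1 j) := by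
    calc ∑ w, (∑ i, M.lam2 w i * ∑ j, B i j * (P.th1 i - P.th1 j)) * p w
        = ∑ w, ∑ i, M.lam2 w i * (∑ j, B i j * (P.th1 i - P.th1 j)) * p w := by
          exact Finset.sum_congr rfl fun w _ => by rw [Finset.sum_mul]
      _ = ∑ i, ∑ w, M.lam2 w i * (∑ j, B i j * (P.th1 i - P.th1 j)) * p w :=
          Finset.sum_comm
      _ = ∑ i, (∑ w, M.lam2 w i * p w) * ∑ j, B i j * (P.th1 i - P.th1 j) := by
          refine Finset.sum_congr rfl fun i _ => ?_
          rw [Finset.sum_mul]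
          exact Finset.sum_congr rfl fun w _ => by ring
  -- second-stage weighted sums
  have hsplitw : ∑ w, ((∑ i, M.lam2 w i * ∑ k, (if nodeL k = i then P.yL2 k w else 0))
        - ∑ i, M.lam2 w i * ∑ k, (if nodeG k = i then P.yG2 k w else 0)) * p w
      = ∑ w, ((∑ i, M.lam2 w i * ∑ j, B i j * (P.th1 i - P.th1 j))
        - ∑ i, M.lam2 w i * ∑ j, B i j * (P.th2 w i - P.th2 w j)) * p w :=
    Finset.sum_congr rfl fun w _ => by rw [stepw w]
  have hLHS : (∑ k, M.lam1 (nodeL k) * P.yL1 k)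
      + (∑ w, (∑ k, M.lam2 w (nodeL k) * P.yL2 k w) * p w)
      - (∑ k, (M.lam1 (nodeG k) * P.yG1 k + ∑ w, M.lam2 w (nodeG k) * P.yG2 k w * p w))
      = ((∑ i, M.lam1 i * ∑ k, (if nodeL k = i then P.yL1 k else 0))
          - ∑ i, M.lam1 i * ∑ k, (if nodeG k = i then P.yG1 k else 0))
        + ∑ w, ((∑ i, M.lam2 w i * ∑ k, (if nodeL k = i then P.yL2 k w else 0))
          - ∑ i, M.lam2 w i * ∑ k, (if nodeG k = i then P.yG2 k w else 0)) * p w := by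
    rw [hGsplit, grpL1, grpG1]
    have e1 : ∑ w, (∑ k, M.lam2 w (nodeL k) * P.yL2 k w) * p w
        = ∑ w, (∑ i, M.lam2 w i * ∑ k, (if nodeL k = i then P.yL2 k w else 0)) * p w :=
      Finset.sum_congr rfl fun w _ => by rw [grpL2 w]
    have e2 : ∑ w, (∑ k, M.lam2 w (nodeG k) * P.yG2 k w) * p w
        = ∑ w, (∑ i, M.lam2 w i * ∑ k, (if nodeG k = i then P.yG2 k w else 0)) * p w :=
      Finset.sum_congr rfl fun w _ => by rw [grpG2 w]
    rw [e1, e2]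
    rw [show ∑ w, ((∑ i, M.lam2 w i * ∑ k, (if nodeL k = i then P.yL2 k w else 0))
          - ∑ i, M.lam2 w i * ∑ k, (if nodeG k = i then P.yG2 k w else 0)) * p w
        = (∑ w, (∑ i, M.lam2 w i * ∑ k, (if nodeL k = i then P.yL2 k w else 0)) * p w)
          - ∑ w, (∑ i, M.lam2 w i * ∑ k, (if nodeG k = i then P.yG2 k w else 0)) * p w by
      rw [← Finset.sum_sub_distrib]
      exact Finset.sum_congr rfl fun w _ => by ring]
    ring
  rw [hLHS, step1, hsplitw]
  rw [show ∑ w, ((∑ i, M.lam2 w i * ∑ j, B i j * (P.th1 i - P.th1 j))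
        - ∑ i, M.lam2 w i * ∑ j, B i j * (P.th2 w i - P.th2 w j)) * p w
      = (∑ w, (∑ i, M.lam2 w i * ∑ j, B i j * (P.th1 i - P.th1 j)) * p w)
        - ∑ w, (∑ i, M.lam2 w i * ∑ j, B i j * (P.th2 w i - P.th2 w j)) * p w by
    rw [← Finset.sum_sub_distrib]
    exact Finset.sum_congr rfl fun w _ => by ring]
  rw [exch]
  have hmerge : -(∑ i, M.lam1 i * ∑ j, B i j * (P.th1 i - P.th1 j))
      + ∑ i, (∑ w, M.lam2 w i * p w) * ∑ j, B i j * (P.th1 i - P.th1 j)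
      = -∑ i, (M.lam1 i - ∑ w, M.lam2 w i * p w) * ∑ j, B i j * (P.th1 i - P.th1 j) := by
    rw [← Finset.sum_neg_distrib, ← Finset.sum_add_distrib, ← Finset.sum_neg_distrib]
    exact Finset.sum_congr rfl fun i _ => by ring
  have hflow2sum : ∑ w, (∑ i, M.lam2 w i * ∑ j, B i j * (P.th2 w i - P.th2 w j)) * p w
      = ∑ w, (-∑ i, ∑ j, M.gam2 w i j * fmax i j) * p w :=
    Finset.sum_congr rfl fun w _ => by rw [flow2 w]
  have hflow2sum' : ∑ w, (-∑ i, ∑ j, M.gam2 w i j * fmax i j) * p w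
      = -∑ w, (∑ i, ∑ j, M.gam2 w i j * fmax i j) * p w := by
    rw [← Finset.sum_neg_distrib]
    exact Finset.sum_congr rfl fun w _ => by ring
  have := flow1
  linarith [hmerge, hflow2sum, hflow2sum', flow1]

lemma DEDObj_effBids_eq (p : W → ℝ) (nodeG : G → N) (nodeL : L → N) (M : UMult N W)
    (P : UPoint N G L W) :
    DEDObj p (effBids nodeG nodeL M) P
      = (∑ k, M.lam1 (nodeL k) * P.yL1 k)
        + (∑ w, (∑ k, M.lam2 w (nodeL k) * P.yL2 k w) * p w)
        - ∑ k, (M.lam1 (nodeG k) * P.yG1 k + ∑ w, M.lam2 w (nodeG k) * P.yG2 k w * p w) :=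
  rfl

/-- Under star-bid stationarity with zero congestion multipliers, the (DED) objective
under the efficient bids vanishes at every feasible point. -/
lemma star_DEDObj_zero (nodeG : G → N) (nodeL : L → N) (B fmax : N → N → ℝ)
    (hB : ∀ i j, B i j = B j i) (p : W → ℝ) (M : UMult N W)
    (hstat1 : ∀ i, ∑ j, B i j * (M.lam1 i - M.lam1 j
        - (∑ w, (M.lam2 w i - M.lam2 w j) * p w) + M.gam1 i j - M.gam1 j i) = 0)
    (hstat2 : ∀ (w : W) (i : N),
        ∑ j, B i j * (M.lam2 w i - M.lam2 w j + M.gam2 w i j - M.gam2 w j i) = 0)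
    (hγ1 : ∀ i j, M.gam1 i j = 0) (hγ2 : ∀ (w : W) (i j : N), M.gam2 w i j = 0)
    (Q : UPoint N G L W) (hQ : UFeasible nodeG nodeL B fmax Q) :
    DEDObj p (effBids nodeG nodeL M) Q = 0 := by
  obtain ⟨h1, h2, h3, h4, hbal1, hbal2, h7, h8⟩ := hQ
  rw [DEDObj_effBids_eq]
  rw [obj_identity nodeG nodeL B fmax hB p Q M hbal1 hbal2 hstat1 hstat2
    (fun i j => by rw [hγ1 i j]; ring) (fun w i j => by rw [hγ2 w i j]; ring)]
  simp [hγ1, hγ2]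

/-- At a primal–dual pair of (DED) the objective value is the congestion rent,
hence nonnegative. -/
lemma DEDObj_kkt_eq (nodeG : G → N) (nodeL : L → N) (B fmax : N → N → ℝ)
    (hB : ∀ i j, B i j = B j i) (p : W → ℝ) (b : Bids G L W)
    (Q : UPoint N G L W) (M : UMult N W)
    (hK : DEDKKT nodeG nodeL B fmax p b Q M) :
    DEDObj p b Q = (∑ i, ∑ j, M.gam1 i j * fmax i j)
      + ∑ w, (∑ i, ∑ j, M.gam2 w i j * fmax i j) * p w := by
  obtain ⟨⟨hG1n, hG2n, hL1n, hL2n, hbal1, hbal2, hl1, hl2⟩, hγ1n, hγ2n, hG1le, hG1eq,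
    hG2le, hG2eq, hL1le, hL1eq, hL2le, hL2eq, hstat1, hstat2, hcomp1, hcomp2⟩ := hK
  have e1 : ∀ k, b.bL1 k * Q.yL1 k = M.lam1 (nodeL k) * Q.yL1 k := by
    intro k
    rcases (hL1n k).lt_or_eq with h | h
    · rw [hL1eq k h]
    · rw [← h, mul_zero, mul_zero]
  have e2 : ∀ k w, b.bL2 k w * Q.yL2 k w = M.lam2 w (nodeL k) * Q.yL2 k w := by
    intro k w
    rcases (hL2n k w).lt_or_eq with h | h
    · rw [hL2eq k w h]
    · rw [← h, mul_zero, mul_zero]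
  have e3 : ∀ k, b.bG1 k * Q.yG1 k = M.lam1 (nodeG k) * Q.yG1 k := by
    intro k
    rcases (hG1n k).lt_or_eq with h | h
    · rw [hG1eq k h]
    · rw [← h, mul_zero, mul_zero]
  have e4 : ∀ k w, b.bG2 k w * Q.yG2 k w = M.lam2 w (nodeG k) * Q.yG2 k w := by
    intro k w
    rcases (hG2n k w).lt_or_eq with h | h
    · rw [hG2eq k w h]
    · rw [← h, mul_zero, mul_zero]
  have E1 : ∑ k, b.bL1 k * Q.yL1 k = ∑ k, M.lam1 (nodeL k) * Q.yL1 k :=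
    Finset.sum_congr rfl fun k _ => e1 k
  have E2 : ∑ w, (∑ k, b.bL2 k w * Q.yL2 k w) * p w
      = ∑ w, (∑ k, M.lam2 w (nodeL k) * Q.yL2 k w) * p w :=
    Finset.sum_congr rfl fun w _ => by
      rw [Finset.sum_congr rfl fun k _ => e2 k w]
  have E3 : ∑ k, (b.bG1 k * Q.yG1 k + ∑ w, b.bG2 k w * Q.yG2 k w * p w)
      = ∑ k, (M.lam1 (nodeG k) * Q.yG1 k + ∑ w, M.lam2 w (nodeG k) * Q.yG2 k w * p w) :=
    Finset.sum_congr rfl fun k _ => by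
      rw [e3 k, Finset.sum_congr rfl fun w _ => by rw [e4 k w]]
  show (∑ k, b.bL1 k * Q.yL1 k) + (∑ w, (∑ k, b.bL2 k w * Q.yL2 k w) * p w)
      - ∑ k, (b.bG1 k * Q.yG1 k + ∑ w, b.bG2 k w * Q.yG2 k w * p w) = _
  rw [E1, E2, E3]
  exact obj_identity nodeG nodeL B fmax hB p Q M hbal1 hbal2 hstat1 hstat2 hcomp1 hcomp2

lemma DEDObj_kkt_nonneg (nodeG : G → N) (nodeL : L → N) (B fmax : N → N → ℝ)
    (hB : ∀ i j, B i j = B j i) (hf : ∀ i j, 0 ≤ fmax i j)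
    (p : W → ℝ) (hp : ∀ w, 0 < p w) (b : Bids G L W)
    (Q : UPoint N G L W) (M : UMult N W)
    (hK : DEDKKT nodeG nodeL B fmax p b Q M) :
    0 ≤ DEDObj p b Q := by
  rw [DEDObj_kkt_eq nodeG nodeL B fmax hB p b Q M hK]
  have hγ1n := hK.2.1
  have hγ2n := hK.2.2.1
  have t1 : 0 ≤ ∑ i, ∑ j, M.gam1 i j * fmax i j :=
    Finset.sum_nonneg fun i _ => Finset.sum_nonneg fun j _ =>
      mul_nonneg (hγ1n i j) (hf i j)
  have t2 : 0 ≤ ∑ w, (∑ i, ∑ j, M.gam2 w i j * fmax i j) * p w :=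
    Finset.sum_nonneg fun w _ => mul_nonneg
      (Finset.sum_nonneg fun i _ => Finset.sum_nonneg fun j _ =>
        mul_nonneg (hγ2n w i j) (hf i j)) (hp w).le
  linarith
/-- Theorem 3 (efficient Nash equilibrium under the congestion-free condition):
if (SPP-U) has an optimal solution with KKT multipliers at which no line limit is
binding in either stage (with zero line-limit multipliers), then the bid profile in
which every participant bids its nodal prices is an efficient Nash equilibrium of the
dynamic economic dispatch game: the optimal allocation solves (DED) under these bids,
and no generator or LSE can increase its payoff by a unilateral bid deviation, at any
primal–dual pair of the deviated (DED). -/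
theorem efficient_nash_equilibrium_congestion_free
    (nodeG : G → N) (nodeL : L → N) (B fmax : N → N → ℝ)
    (hBsymm : ∀ i j, B i j = B j i)
    (hfsymm : ∀ i j, fmax i j = fmax j i) (hfnonneg : ∀ i j, 0 ≤ fmax i j)
    (p : W → ℝ) (hp : ∀ w, 0 < p w) (hpsum : ∑ w, p w = 1)
    (c1 c2 : G → ℝ → ℝ) (cdr cbo : L → ℝ → ℝ)
    (hA1 : Assumption1 c1 c2 cdr cbo)
    (D : L → ℝ) (hD : ∀ k, 0 ≤ D k)
    (ren : L → W → ℝ) (hren : ∀ k w, 0 ≤ ren k w)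
    (hA2 : Assumption2 (W := W) (L := L) nodeG nodeL B fmax)
    (Pstar : UPoint N G L W) (Mstar : UMult N W)
    -- (SPP-U) optimality of (y*, θ*)
    (hfeas : UFeasible nodeG nodeL B fmax Pstar)
    (hopt : ∀ Q : UPoint N G L W, UFeasible nodeG nodeL B fmax Q →
        UObj p c1 c2 cdr cbo D ren Q ≤ UObj p c1 c2 cdr cbo D ren Pstar)
    -- KKT multipliers
    (hKKT : UKKT nodeG nodeL B fmax p c1 c2 cdr cbo D ren Pstar Mstar)
    -- congestion-free condition: no line-limit constraint binds, γ* = 0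
    (hcf1 : ∀ i j, B i j * (Pstar.th1 i - Pstar.th1 j) < fmax i j)
    (hcf2 : ∀ (w : W) (i j : N), B i j * (Pstar.th2 w i - Pstar.th2 w j) < fmax i j)
    (hγ1 : ∀ i j, Mstar.gam1 i j = 0) (hγ2 : ∀ (w : W) (i j : N), Mstar.gam2 w i j = 0) :
    -- (y*, θ*) is optimal for (DED) under the efficient bid profile b*
    (∀ Q : UPoint N G L W, UFeasible nodeG nodeL B fmax Q →
        DEDObj p (effBids nodeG nodeL Mstar) Q ≤ DEDObj p (effBids nodeG nodeL Mstar) Pstar)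
    -- no generator benefits from a unilateral deviation
    ∧ (∀ (k0 : G) (b' : Bids G L W), GenDeviation (effBids nodeG nodeL Mstar) b' k0 →
        ∀ (Q : UPoint N G L W) (M' : UMult N W),
          DEDKKT nodeG nodeL B fmax p b' Q M' →
          genPayoff nodeG p c1 c2 k0 Q M' ≤ genPayoff nodeG p c1 c2 k0 Pstar Mstar)
    -- no LSE benefits from a unilateral deviation
    ∧ (∀ (k0 : L) (b' : Bids G L W), LSEDeviation (effBids nodeG nodeL Mstar) b' k0 →
        ∀ (Q : UPoint N G L W) (M' : UMult N W),
          DEDKKT nodeG nodeL B fmax p b' Q M' →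
          lsePayoff nodeL p cdr cbo D ren k0 Q M'
            ≤ lsePayoff nodeL p cdr cbo D ren k0 Pstar Mstar) := by
  obtain ⟨hPfeas, hsγ1n, hsγ2n, hG1le, hG1eq, hG2le, hG2eq, hLSE, hstat1, hstat2,
    hscomp1, hscomp2⟩ := hKKT
  obtain ⟨hc1, hc2, hcdr, hcbo⟩ := hA1
  have hzeroQ : ∀ Q : UPoint N G L W, UFeasible nodeG nodeL B fmax Q →
      DEDObj p (effBids nodeG nodeL Mstar) Q = 0 := fun Q hQ =>
    star_DEDObj_zero nodeG nodeL B fmax hBsymm p Mstar hstat1 hstat2 hγ1 hγ2 Q hQ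
  refine ⟨?_, ?_, ?_⟩
  · -- efficiency: (y*, θ*) solves (DED) under b*
    intro Q hQ
    rw [hzeroQ Q hQ, hzeroQ Pstar hfeas]
  · -- generator deviations
    intro k0 b' hdev Q M' hK
    obtain ⟨hnn, hg1, hg2, hl1, hl2⟩ := hdev
    have hQfeas := hK.1
    have hzero := hzeroQ Q hQfeas
    have hnonneg := DEDObj_kkt_nonneg nodeG nodeL B fmax hBsymm hfnonneg p hp b' Q M' hK
    have hsum : (∑ k, (b'.bG1 k * Q.yG1 k + ∑ w, b'.bG2 k w * Q.yG2 k w * p w))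
        - ∑ k, ((effBids nodeG nodeL Mstar).bG1 k * Q.yG1 k
            + ∑ w, (effBids nodeG nodeL Mstar).bG2 k w * Q.yG2 k w * p w)
        = (b'.bG1 k0 * Q.yG1 k0 + ∑ w, b'.bG2 k0 w * Q.yG2 k0 w * p w)
          - (Mstar.lam1 (nodeG k0) * Q.yG1 k0
            + ∑ w, Mstar.lam2 w (nodeG k0) * Q.yG2 k0 w * p w) := by
      rw [← Finset.sum_sub_distrib]
      rw [Finset.sum_eq_single_of_mem k0 (Finset.mem_univ k0) ?side]
      case side =>
        intro k _ hk
        have e : ∑ w, b'.bG2 k w * Q.yG2 k w * p w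
            = ∑ w, (effBids nodeG nodeL Mstar).bG2 k w * Q.yG2 k w * p w :=
          Finset.sum_congr rfl fun w _ => by rw [hg2 k w hk]
        rw [hg1 k hk, e]
        ring
      rfl
    have hb'unfold : DEDObj p b' Q = (∑ k, b'.bL1 k * Q.yL1 k)
        + (∑ w, (∑ k, b'.bL2 k w * Q.yL2 k w) * p w)
        - ∑ k, (b'.bG1 k * Q.yG1 k + ∑ w, b'.bG2 k w * Q.yG2 k w * p w) := rfl
    have heffunfold : DEDObj p (effBids nodeG nodeL Mstar) Q
        = (∑ k, (effBids nodeG nodeL Mstar).bL1 k * Q.yL1 k)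
          + (∑ w, (∑ k, (effBids nodeG nodeL Mstar).bL2 k w * Q.yL2 k w) * p w)
          - ∑ k, ((effBids nodeG nodeL Mstar).bG1 k * Q.yG1 k
            + ∑ w, (effBids nodeG nodeL Mstar).bG2 k w * Q.yG2 k w * p w) := rfl
    have hobj : DEDObj p b' Q = DEDObj p (effBids nodeG nodeL Mstar) Q
        - ((b'.bG1 k0 * Q.yG1 k0 + ∑ w, b'.bG2 k0 w * Q.yG2 k0 w * p w)
          - (Mstar.lam1 (nodeG k0) * Q.yG1 k0
            + ∑ w, Mstar.lam2 w (nodeG k0) * Q.yG2 k0 w * p w)) := by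
      rw [hb'unfold, heffunfold, hl1, hl2]
      linarith [hsum]
    have hkey : b'.bG1 k0 * Q.yG1 k0 + ∑ w, b'.bG2 k0 w * Q.yG2 k0 w * p w
        ≤ Mstar.lam1 (nodeG k0) * Q.yG1 k0
          + ∑ w, Mstar.lam2 w (nodeG k0) * Q.yG2 k0 w * p w := by
      linarith [hobj, hzero, hnonneg]
    obtain ⟨⟨hQG1n, hQG2n, hQL1n, hQL2n, _, _, _, _⟩, _, _, _, hG1eq', _, hG2eq',
      _, _, _, _, _, _, _, _⟩ := hK
    have e1 : M'.lam1 (nodeG k0) * Q.yG1 k0 = b'.bG1 k0 * Q.yG1 k0 := by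
      rcases (hQG1n k0).lt_or_eq with h | h
      · rw [hG1eq' k0 h]
      · rw [← h, mul_zero, mul_zero]
    have e2 : ∀ w, M'.lam2 w (nodeG k0) * Q.yG2 k0 w = b'.bG2 k0 w * Q.yG2 k0 w := by
      intro w
      rcases (hQG2n k0 w).lt_or_eq with h | h
      · rw [hG2eq' k0 w h]
      · rw [← h, mul_zero, mul_zero]
    have hsplitQ : ∑ w, (M'.lam2 w (nodeG k0) * Q.yG2 k0 w - c2 k0 (Q.yG2 k0 w)) * p w
        = (∑ w, b'.bG2 k0 w * Q.yG2 k0 w * p w) - ∑ w, c2 k0 (Q.yG2 k0 w) * p w := by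
      rw [← Finset.sum_sub_distrib]
      exact Finset.sum_congr rfl fun w _ => by rw [e2 w]; ring
    have hsplitS : ∑ w, (Mstar.lam2 w (nodeG k0) * Q.yG2 k0 w - c2 k0 (Q.yG2 k0 w)) * p w
        = (∑ w, Mstar.lam2 w (nodeG k0) * Q.yG2 k0 w * p w)
          - ∑ w, c2 k0 (Q.yG2 k0 w) * p w := by
      rw [← Finset.sum_sub_distrib]
      exact Finset.sum_congr rfl fun w _ => by ring
    have hmid : genPayoff nodeG p c1 c2 k0 Q M'
        ≤ Mstar.lam1 (nodeG k0) * Q.yG1 k0 - c1 k0 (Q.yG1 k0)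
          + ∑ w, (Mstar.lam2 w (nodeG k0) * Q.yG2 k0 w - c2 k0 (Q.yG2 k0 w)) * p w := by
      show M'.lam1 (nodeG k0) * Q.yG1 k0 - c1 k0 (Q.yG1 k0)
          + ∑ w, (M'.lam2 w (nodeG k0) * Q.yG2 k0 w - c2 k0 (Q.yG2 k0 w)) * p w ≤ _
      rw [e1, hsplitQ, hsplitS]
      linarith [hkey]
    have hstar : Mstar.lam1 (nodeG k0) * Q.yG1 k0 - c1 k0 (Q.yG1 k0)
          + ∑ w, (Mstar.lam2 w (nodeG k0) * Q.yG2 k0 w - c2 k0 (Q.yG2 k0 w)) * p w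
        ≤ genPayoff nodeG p c1 c2 k0 Pstar Mstar := by
      show _ ≤ Mstar.lam1 (nodeG k0) * Pstar.yG1 k0 - c1 k0 (Pstar.yG1 k0)
          + ∑ w, (Mstar.lam2 w (nodeG k0) * Pstar.yG2 k0 w - c2 k0 (Pstar.yG2 k0 w)) * p w
      have t1 : Mstar.lam1 (nodeG k0) * Q.yG1 k0 - c1 k0 (Q.yG1 k0)
          ≤ Mstar.lam1 (nodeG k0) * Pstar.yG1 k0 - c1 k0 (Pstar.yG1 k0) :=
        profit_max' (c1 k0) (hc1 k0).1 (hc1 k0).2.2.1 _ _ _ (hPfeas.1 k0) (hQG1n k0)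
          (hG1le k0) (hG1eq k0)
      have t2 : ∀ w, (Mstar.lam2 w (nodeG k0) * Q.yG2 k0 w - c2 k0 (Q.yG2 k0 w)) * p w
          ≤ (Mstar.lam2 w (nodeG k0) * Pstar.yG2 k0 w - c2 k0 (Pstar.yG2 k0 w)) * p w :=
        fun w => mul_le_mul_of_nonneg_right
          (profit_max' (c2 k0) (hc2 k0).1 (hc2 k0).2.2.1 _ _ _ (hPfeas.2.1 k0 w)
            (hQG2n k0 w) (hG2le k0 w) (hG2eq k0 w)) (hp w).le
      have t3 := Finset.sum_le_sum (fun w (_ : w ∈ Finset.univ) => t2 w)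
      linarith
    exact le_trans hmid hstar
  · -- LSE deviations
    intro k0 b' hdev Q M' hK
    obtain ⟨hnn, hdl1, hdl2, hg1f, hg2f⟩ := hdev
    have hQfeas := hK.1
    have hzero := hzeroQ Q hQfeas
    have hnonneg := DEDObj_kkt_nonneg nodeG nodeL B fmax hBsymm hfnonneg p hp b' Q M' hK
    have hsumL1 : (∑ k, b'.bL1 k * Q.yL1 k)
        - ∑ k, (effBids nodeG nodeL Mstar).bL1 k * Q.yL1 k
        = b'.bL1 k0 * Q.yL1 k0 - Mstar.lam1 (nodeL k0) * Q.yL1 k0 := by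
      rw [← Finset.sum_sub_distrib]
      rw [Finset.sum_eq_single_of_mem k0 (Finset.mem_univ k0) ?side]
      case side => intro k _ hk; rw [hdl1 k hk]; ring
      rfl
    have hsumL2 : ∀ w, (∑ k, b'.bL2 k w * Q.yL2 k w)
        - ∑ k, (effBids nodeG nodeL Mstar).bL2 k w * Q.yL2 k w
        = b'.bL2 k0 w * Q.yL2 k0 w - Mstar.lam2 w (nodeL k0) * Q.yL2 k0 w := by
      intro w
      rw [← Finset.sum_sub_distrib]
      rw [Finset.sum_eq_single_of_mem k0 (Finset.mem_univ k0) ?side]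
      case side => intro k _ hk; rw [hdl2 k w hk]; ring
      rfl
    have hsumL2' : (∑ w, (∑ k, b'.bL2 k w * Q.yL2 k w) * p w)
        - ∑ w, (∑ k, (effBids nodeG nodeL Mstar).bL2 k w * Q.yL2 k w) * p w
        = (∑ w, b'.bL2 k0 w * Q.yL2 k0 w * p w)
          - ∑ w, Mstar.lam2 w (nodeL k0) * Q.yL2 k0 w * p w := by
      rw [← Finset.sum_sub_distrib, ← Finset.sum_sub_distrib]
      refine Finset.sum_congr rfl fun w _ => ?_
      rw [← sub_mul, hsumL2 w]
      ring
    have hb'unfold : DEDObj p b' Q = (∑ k, b'.bL1 k * Q.yL1 k)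
        + (∑ w, (∑ k, b'.bL2 k w * Q.yL2 k w) * p w)
        - ∑ k, (b'.bG1 k * Q.yG1 k + ∑ w, b'.bG2 k w * Q.yG2 k w * p w) := rfl
    have heffunfold : DEDObj p (effBids nodeG nodeL Mstar) Q
        = (∑ k, (effBids nodeG nodeL Mstar).bL1 k * Q.yL1 k)
          + (∑ w, (∑ k, (effBids nodeG nodeL Mstar).bL2 k w * Q.yL2 k w) * p w)
          - ∑ k, ((effBids nodeG nodeL Mstar).bG1 k * Q.yG1 k
            + ∑ w, (effBids nodeG nodeL Mstar).bG2 k w * Q.yG2 k w * p w) := rfl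
    have hobj : DEDObj p b' Q = DEDObj p (effBids nodeG nodeL Mstar) Q
        + ((b'.bL1 k0 * Q.yL1 k0 - Mstar.lam1 (nodeL k0) * Q.yL1 k0)
          + ((∑ w, b'.bL2 k0 w * Q.yL2 k0 w * p w)
            - ∑ w, Mstar.lam2 w (nodeL k0) * Q.yL2 k0 w * p w)) := by
      rw [hb'unfold, heffunfold, hg1f, hg2f]
      linarith [hsumL1, hsumL2']
    have hkey : Mstar.lam1 (nodeL k0) * Q.yL1 k0
          + ∑ w, Mstar.lam2 w (nodeL k0) * Q.yL2 k0 w * p w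
        ≤ b'.bL1 k0 * Q.yL1 k0 + ∑ w, b'.bL2 k0 w * Q.yL2 k0 w * p w := by
      linarith [hobj, hzero, hnonneg]
    obtain ⟨⟨hQG1n, hQG2n, hQL1n, hQL2n, _, _, _, _⟩, _, _, _, _, _, _, _, hL1eq',
      _, hL2eq', _, _, _, _⟩ := hK
    have e1 : M'.lam1 (nodeL k0) * Q.yL1 k0 = b'.bL1 k0 * Q.yL1 k0 := by
      rcases (hQL1n k0).lt_or_eq with h | h
      · rw [hL1eq' k0 h]
      · rw [← h, mul_zero, mul_zero]
    have e2 : ∀ w, M'.lam2 w (nodeL k0) * Q.yL2 k0 w = b'.bL2 k0 w * Q.yL2 k0 w := by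
      intro w
      rcases (hQL2n k0 w).lt_or_eq with h | h
      · rw [hL2eq' k0 w h]
      · rw [← h, mul_zero, mul_zero]
    have hQsplit : ∑ w, (uVal (cdr k0) (cbo k0) (D k0) (ren k0 w) (Q.yL1 k0 + Q.yL2 k0 w)
          - M'.lam2 w (nodeL k0) * Q.yL2 k0 w) * p w
        = (∑ w, uVal (cdr k0) (cbo k0) (D k0) (ren k0 w) (Q.yL1 k0 + Q.yL2 k0 w) * p w)
          - ∑ w, b'.bL2 k0 w * Q.yL2 k0 w * p w := by
      rw [← Finset.sum_sub_distrib]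
      exact Finset.sum_congr rfl fun w _ => by rw [e2 w]; ring
    have hpayQ : lsePayoff nodeL p cdr cbo D ren k0 Q M'
        = (∑ w, uVal (cdr k0) (cbo k0) (D k0) (ren k0 w) (Q.yL1 k0 + Q.yL2 k0 w) * p w)
          - (b'.bL1 k0 * Q.yL1 k0 + ∑ w, b'.bL2 k0 w * Q.yL2 k0 w * p w) := by
      show -(M'.lam1 (nodeL k0)) * Q.yL1 k0
          + ∑ w, (uVal (cdr k0) (cbo k0) (D k0) (ren k0 w) (Q.yL1 k0 + Q.yL2 k0 w)
            - M'.lam2 w (nodeL k0) * Q.yL2 k0 w) * p w = _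
      rw [hQsplit]
      have : -(M'.lam1 (nodeL k0)) * Q.yL1 k0 = -(b'.bL1 k0 * Q.yL1 k0) := by
        rw [neg_mul, e1]
      linarith [this]
    obtain ⟨g, hsup, hgle1, hgeq1, hgle2, hgeq2⟩ := hLSE k0
    have hu : ∀ w, uVal (cdr k0) (cbo k0) (D k0) (ren k0 w) (Q.yL1 k0 + Q.yL2 k0 w)
        ≤ uVal (cdr k0) (cbo k0) (D k0) (ren k0 w) (Pstar.yL1 k0 + Pstar.yL2 k0 w)
          + g w * ((Q.yL1 k0 + Q.yL2 k0 w) - (Pstar.yL1 k0 + Pstar.yL2 k0 w)) :=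
      fun w => hsup w _
    have husum : ∑ w, uVal (cdr k0) (cbo k0) (D k0) (ren k0 w) (Q.yL1 k0 + Q.yL2 k0 w) * p w
        ≤ ∑ w, (uVal (cdr k0) (cbo k0) (D k0) (ren k0 w) (Pstar.yL1 k0 + Pstar.yL2 k0 w)
            + g w * ((Q.yL1 k0 + Q.yL2 k0 w) - (Pstar.yL1 k0 + Pstar.yL2 k0 w))) * p w :=
      Finset.sum_le_sum fun w _ => mul_le_mul_of_nonneg_right (hu w) (hp w).le
    have hdec : ∑ w, (uVal (cdr k0) (cbo k0) (D k0) (ren k0 w) (Pstar.yL1 k0 + Pstar.yL2 k0 w)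
            + g w * ((Q.yL1 k0 + Q.yL2 k0 w) - (Pstar.yL1 k0 + Pstar.yL2 k0 w))) * p w
        = (∑ w, uVal (cdr k0) (cbo k0) (D k0) (ren k0 w) (Pstar.yL1 k0 + Pstar.yL2 k0 w) * p w)
          + ((∑ w, g w * p w) * (Q.yL1 k0 - Pstar.yL1 k0)
            + ∑ w, g w * (Q.yL2 k0 w - Pstar.yL2 k0 w) * p w) := by
      have expand : ∀ w : W,
          (uVal (cdr k0) (cbo k0) (D k0) (ren k0 w) (Pstar.yL1 k0 + Pstar.yL2 k0 w)
            + g w * ((Q.yL1 k0 + Q.yL2 k0 w) - (Pstar.yL1 k0 + Pstar.yL2 k0 w))) * p w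
          = uVal (cdr k0) (cbo k0) (D k0) (ren k0 w) (Pstar.yL1 k0 + Pstar.yL2 k0 w) * p w
            + (g w * p w * (Q.yL1 k0 - Pstar.yL1 k0)
              + g w * (Q.yL2 k0 w - Pstar.yL2 k0 w) * p w) := fun w => by ring
      rw [Finset.sum_congr rfl fun w _ => expand w, Finset.sum_add_distrib,
        Finset.sum_add_distrib, Finset.sum_mul]
    have piece1 : (∑ w, g w * p w) * (Q.yL1 k0 - Pstar.yL1 k0)
        ≤ Mstar.lam1 (nodeL k0) * (Q.yL1 k0 - Pstar.yL1 k0) := by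
      rcases (hPfeas.2.2.1 k0).lt_or_eq with h | h
      · rw [hgeq1 h]
      · rw [← h, sub_zero]
        exact mul_le_mul_of_nonneg_right hgle1 (hQL1n k0)
    have piece2 : ∀ w, g w * (Q.yL2 k0 w - Pstar.yL2 k0 w) * p w
        ≤ Mstar.lam2 w (nodeL k0) * (Q.yL2 k0 w - Pstar.yL2 k0 w) * p w := by
      intro w
      rcases (hPfeas.2.2.2.1 k0 w).lt_or_eq with h | h
      · rw [hgeq2 w h]
      · rw [← h, sub_zero]
        exact mul_le_mul_of_nonneg_right
          (mul_le_mul_of_nonneg_right (hgle2 w) (hQL2n k0 w)) (hp w).le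
    have piece2sum := Finset.sum_le_sum (fun w (_ : w ∈ Finset.univ) => piece2 w)
    have hlamsplit : ∑ w, Mstar.lam2 w (nodeL k0) * (Q.yL2 k0 w - Pstar.yL2 k0 w) * p w
        = (∑ w, Mstar.lam2 w (nodeL k0) * Q.yL2 k0 w * p w)
          - ∑ w, Mstar.lam2 w (nodeL k0) * Pstar.yL2 k0 w * p w := by
      rw [← Finset.sum_sub_distrib]
      exact Finset.sum_congr rfl fun w _ => by ring
    have hexp1 : Mstar.lam1 (nodeL k0) * (Q.yL1 k0 - Pstar.yL1 k0)
        = Mstar.lam1 (nodeL k0) * Q.yL1 k0 - Mstar.lam1 (nodeL k0) * Pstar.yL1 k0 := by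
      ring
    have hstarsplit : ∑ w, (uVal (cdr k0) (cbo k0) (D k0) (ren k0 w)
          (Pstar.yL1 k0 + Pstar.yL2 k0 w)
          - Mstar.lam2 w (nodeL k0) * Pstar.yL2 k0 w) * p w
        = (∑ w, uVal (cdr k0) (cbo k0) (D k0) (ren k0 w)
            (Pstar.yL1 k0 + Pstar.yL2 k0 w) * p w)
          - ∑ w, Mstar.lam2 w (nodeL k0) * Pstar.yL2 k0 w * p w := by
      rw [← Finset.sum_sub_distrib]
      exact Finset.sum_congr rfl fun w _ => by ring
    have hpayS : lsePayoff nodeL p cdr cbo D ren k0 Pstar Mstar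
        = -(Mstar.lam1 (nodeL k0)) * Pstar.yL1 k0
          + ∑ w, (uVal (cdr k0) (cbo k0) (D k0) (ren k0 w)
              (Pstar.yL1 k0 + Pstar.yL2 k0 w)
            - Mstar.lam2 w (nodeL k0) * Pstar.yL2 k0 w) * p w := rfl
    rw [hpayQ, hpayS, hstarsplit]
    nlinarith [hkey, husum, hdec, piece1, piece2sum, hlamsplit, hexp1]
end

section
/- (Theorem 4, existence of an efficient Nash equilibrium under the monopoly-free condition) Suppose Assumption 2 holds, (SPP-U) has an optimal solution (y*, θ*) with multipliers (λ*, γ*) satisfying its KKT conditions, and the monopoly-free condition holds: at every node there are either at least two generators or no generators at all, and either at least two LSEs or no LSEs at all. Define the bid profile b* in which every generator and every LSE at node i bids b^G_{1,k} = b^L_{1,k} = λ*_{1,i} and b^G_{2,k}(w) = b^L_{2,k}(w) = λ*_{2,i}(w). Then b* is an efficient Nash equilibrium of the dynamic economic dispatch game: (y*, θ*) is an optimal solution of (DED) under b*, and for every market participant (i,k), every unilateral deviation of that participant's bid vector (all other bids fixed at b*), and every primal–dual pair ((y, θ), (λ, γ)) satisfying the KKT conditions of the deviated (DED), the deviating participant's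 payoff evaluated at (y, λ) is at most its payoff evaluated at (y*, λ*). -/
open scoped BigOperators

variable {N G L W : Type} [Fintype N] [Fintype G] [Fintype L] [Fintype W] [DecidableEq N]

set_option linter.unusedSectionVars false
set_option maxHeartbeats 1000000

open Finset in
/-- Group a sum over participants by node. -/
lemma sum_group {K : Type} [Fintype K] (node : K → N) (f : N → ℝ) (q : K → ℝ) :
    ∑ k, f (node k) * q k = ∑ i, f i * ∑ k, (if node k = i then q k else 0) := by
  simp_rw [Finset.mul_sum, mul_ite, mul_zero]
  rw [Finset.sum_comm]
  refine Finset.sum_congr rfl fun k _ => ?_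
  rw [Finset.sum_ite_eq Finset.univ (node k) (fun i => f i * q k)]
  simp

/-- Symmetrization identity 1. -/
lemma key1 (B : N → N → ℝ) (hB : ∀ i j, B i j = B j i) (μ θ : N → ℝ) :
    ∑ i, μ i * ∑ j, B i j * (θ i - θ j)
      = ∑ i, ∑ j, B i j * (μ i - μ j) * θ i := by
  have h2 : ∑ i, ∑ j, B i j * μ i * θ j = ∑ i, ∑ j, B i j * μ j * θ i := by
    rw [Finset.sum_comm]
    exact Finset.sum_congr rfl fun i _ => Finset.sum_congr rfl fun j _ => by rw [hB j i]
  simp_rw [Finset.mul_sum]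
  calc ∑ i, ∑ j, μ i * (B i j * (θ i - θ j))
      = (∑ i, ∑ j, B i j * μ i * θ i) - ∑ i, ∑ j, B i j * μ i * θ j := by
        rw [← Finset.sum_sub_distrib]
        refine Finset.sum_congr rfl fun i _ => ?_
        rw [← Finset.sum_sub_distrib]
        exact Finset.sum_congr rfl fun j _ => by ring
    _ = (∑ i, ∑ j, B i j * μ i * θ i) - ∑ i, ∑ j, B i j * μ j * θ i := by rw [h2]
    _ = ∑ i, ∑ j, B i j * (μ i - μ j) * θ i := by
        rw [← Finset.sum_sub_distrib]
        refine Finset.sum_congr rfl fun i _ => ?_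
        rw [← Finset.sum_sub_distrib]
        exact Finset.sum_congr rfl fun j _ => by ring

/-- Symmetrization identity 2. -/
lemma key2 (B : N → N → ℝ) (hB : ∀ i j, B i j = B j i) (g : N → N → ℝ) (θ : N → ℝ) :
    ∑ i, θ i * ∑ j, B i j * (g i j - g j i)
      = ∑ i, ∑ j, g i j * (B i j * (θ i - θ j)) := by
  have h2 : ∑ i, ∑ j, B i j * θ i * g j i = ∑ i, ∑ j, B i j * θ j * g i j := by
    rw [Finset.sum_comm]
    exact Finset.sum_congr rfl fun i _ => Finset.sum_congr rfl fun j _ => by rw [hB j i]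
  simp_rw [Finset.mul_sum]
  calc ∑ i, ∑ j, θ i * (B i j * (g i j - g j i))
      = (∑ i, ∑ j, B i j * θ i * g i j) - ∑ i, ∑ j, B i j * θ i * g j i := by
        rw [← Finset.sum_sub_distrib]
        refine Finset.sum_congr rfl fun i _ => ?_
        rw [← Finset.sum_sub_distrib]
        exact Finset.sum_congr rfl fun j _ => by ring
    _ = (∑ i, ∑ j, B i j * θ i * g i j) - ∑ i, ∑ j, B i j * θ j * g i j := by rw [h2]
    _ = ∑ i, ∑ j, g i j * (B i j * (θ i - θ j)) := by
        rw [← Finset.sum_sub_distrib]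
        refine Finset.sum_congr rfl fun i _ => ?_
        rw [← Finset.sum_sub_distrib]
        exact Finset.sum_congr rfl fun j _ => by ring

/-- Tangent-line inequality for a convex differentiable function on [0,∞). -/
lemma convex_tangent {f : ℝ → ℝ} (hc : ConvexOn ℝ (Set.Ici (0:ℝ)) f)
    (hd : Differentiable ℝ f) {x y : ℝ} (hx : 0 ≤ x) (hy : 0 ≤ y) :
    f x + deriv f x * (y - x) ≤ f y := by
  rcases lt_trichotomy x y with h | rfl | h
  · have := hc.deriv_le_slope hx hy h (hd x)
    rw [slope_def_field, le_div_iff₀ (by linarith)] at this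
    nlinarith
  · simp
  · have := hc.slope_le_deriv hy hx h (hd x)
    rw [slope_def_field, div_le_iff₀ (by linarith)] at this
    nlinarith

/-- A producer facing price `lam` with `lam ≤ c'(y)`, equality if `y > 0`,
maximizes `lam * q − c q` over `q ≥ 0` at `y`. -/
lemma producer_opt {f : ℝ → ℝ} (hc : ConvexOn ℝ (Set.Ici (0:ℝ)) f)
    (hd : Differentiable ℝ f) {lam y q : ℝ} (hy : 0 ≤ y) (hq : 0 ≤ q)
    (h1 : lam ≤ deriv f y) (h2 : 0 < y → deriv f y = lam) :
    lam * q - f q ≤ lam * y - f y := by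
  have ht := convex_tangent hc hd hy hq
  rcases eq_or_lt_of_le hy with h | h
  · nlinarith [ht]
  · have := h2 h; nlinarith [ht]

/-- The flow representation of the (DED) objective under the efficient bids. -/
lemma dedobj_flow (nodeG : G → N) (nodeL : L → N) (B : N → N → ℝ)
    (hBsymm : ∀ i j, B i j = B j i) (p : W → ℝ) (M : UMult N W)
    (stat1 : ∀ i, ∑ j, B i j * (M.lam1 i - M.lam1 j
        - (∑ w, (M.lam2 w i - M.lam2 w j) * p w) + M.gam1 i j - M.gam1 j i) = 0)
    (stat2 : ∀ (w : W) (i : N),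
        ∑ j, B i j * (M.lam2 w i - M.lam2 w j + M.gam2 w i j - M.gam2 w j i) = 0)
    (Q : UPoint N G L W)
    (bal1 : ∀ i, (∑ k, if nodeG k = i then Q.yG1 k else 0)
        - (∑ k, if nodeL k = i then Q.yL1 k else 0)
      = ∑ j, B i j * (Q.th1 i - Q.th1 j))
    (bal2 : ∀ (w : W) (i : N), (∑ k, if nodeG k = i then Q.yG2 k w else 0)
        - (∑ k, if nodeL k = i then Q.yL2 k w else 0)
      = ∑ j, B i j * (Q.th2 w i - Q.th2 w j - Q.th1 i + Q.th1 j)) :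
    DEDObj p (effBids nodeG nodeL M) Q
      = (∑ i, ∑ j, M.gam1 i j * (B i j * (Q.th1 i - Q.th1 j)))
        + ∑ w, (∑ i, ∑ j, M.gam2 w i j * (B i j * (Q.th2 w i - Q.th2 w j))) * p w := by
  -- stationarity, split form
  have hsplit1 : ∀ i, -∑ j, B i j * (M.lam1 i - M.lam1 j
      - (∑ w, (M.lam2 w i - M.lam2 w j) * p w))
        = ∑ j, B i j * (M.gam1 i j - M.gam1 j i) := by
    intro i
    have h := stat1 i
    have h2 : ∑ j, (B i j * (M.lam1 i - M.lam1 j - (∑ w, (M.lam2 w i - M.lam2 w j) * p w))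
        + B i j * (M.gam1 i j - M.gam1 j i)) = 0 := by
      rw [← h]; exact Finset.sum_congr rfl fun j _ => by ring
    rw [Finset.sum_add_distrib] at h2
    linarith
  have hsplit2 : ∀ (w : W) (i : N), -∑ j, B i j * (M.lam2 w i - M.lam2 w j)
        = ∑ j, B i j * (M.gam2 w i j - M.gam2 w j i) := by
    intro w i
    have h := stat2 w i
    have h2 : ∑ j, (B i j * (M.lam2 w i - M.lam2 w j)
        + B i j * (M.gam2 w i j - M.gam2 w j i)) = 0 := by
      rw [← h]; exact Finset.sum_congr rfl fun j _ => by ring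
    rw [Finset.sum_add_distrib] at h2
    linarith
  -- nodal aggregates
  set SL1 : N → ℝ := fun i => ∑ k, (if nodeL k = i then Q.yL1 k else 0) with hSL1
  set SG1 : N → ℝ := fun i => ∑ k, (if nodeG k = i then Q.yG1 k else 0) with hSG1
  set SL2 : W → N → ℝ := fun w i => ∑ k, (if nodeL k = i then Q.yL2 k w else 0) with hSL2
  set SG2 : W → N → ℝ := fun w i => ∑ k, (if nodeG k = i then Q.yG2 k w else 0) with hSG2
  -- step 1 : nodal form of objective
  have hstep1 : DEDObj p (effBids nodeG nodeL M) Q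
      = (∑ i, M.lam1 i * (SL1 i - SG1 i))
        + ∑ w, (∑ i, M.lam2 w i * (SL2 w i - SG2 w i)) * p w := by
    have hgen : ∑ k, (M.lam1 (nodeG k) * Q.yG1 k
          + ∑ w, M.lam2 w (nodeG k) * Q.yG2 k w * p w)
        = (∑ k, M.lam1 (nodeG k) * Q.yG1 k)
          + ∑ w, (∑ k, M.lam2 w (nodeG k) * Q.yG2 k w) * p w := by
      rw [Finset.sum_add_distrib, Finset.sum_comm]
      congr 1
      exact Finset.sum_congr rfl fun w _ => by rw [Finset.sum_mul]
    have hL1 := sum_group nodeL (fun i => M.lam1 i) (fun k => Q.yL1 k)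
    have hG1 := sum_group nodeG (fun i => M.lam1 i) (fun k => Q.yG1 k)
    have hL2 : ∀ w : W, ∑ k, M.lam2 w (nodeL k) * Q.yL2 k w
        = ∑ i, M.lam2 w i * SL2 w i := fun w =>
      sum_group nodeL (fun i => M.lam2 w i) (fun k => Q.yL2 k w)
    have hG2 : ∀ w : W, ∑ k, M.lam2 w (nodeG k) * Q.yG2 k w
        = ∑ i, M.lam2 w i * SG2 w i := fun w =>
      sum_group nodeG (fun i => M.lam2 w i) (fun k => Q.yG2 k w)
    show (∑ k, M.lam1 (nodeL k) * Q.yL1 k)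
        + (∑ w, (∑ k, M.lam2 w (nodeL k) * Q.yL2 k w) * p w)
        - ∑ k, (M.lam1 (nodeG k) * Q.yG1 k + ∑ w, M.lam2 w (nodeG k) * Q.yG2 k w * p w) = _
    rw [hgen, hL1, hG1]
    simp_rw [hL2, hG2]
    rw [show ∀ a b c d : ℝ, a + b - (c + d) = (a - c) + (b - d) from fun a b c d => by ring]
    congr 1
    · rw [← Finset.sum_sub_distrib]
      exact Finset.sum_congr rfl fun i _ => by ring
    · rw [← Finset.sum_sub_distrib]
      refine Finset.sum_congr rfl fun w _ => ?_
      rw [← sub_mul, ← Finset.sum_sub_distrib]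
      congr 1
      exact Finset.sum_congr rfl fun i _ => by ring
  -- step 2 : flow form of objective
  have hbal1' : ∀ i, SL1 i - SG1 i = -∑ j, B i j * (Q.th1 i - Q.th1 j) := by
    intro i; have := bal1 i; simp only [hSL1, hSG1] at this ⊢; linarith
  have hbal2' : ∀ (w : W) (i : N), SL2 w i - SG2 w i
      = -∑ j, B i j * ((Q.th2 w i - Q.th1 i) - (Q.th2 w j - Q.th1 j)) := by
    intro w i
    have h := bal2 w i
    have : SG2 w i - SL2 w i = ∑ j, B i j * ((Q.th2 w i - Q.th1 i) - (Q.th2 w j - Q.th1 j)) := by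
      rw [h]; exact Finset.sum_congr rfl fun j _ => by ring
    linarith
  rw [hstep1]
  simp_rw [hbal1', hbal2']
  -- step 3 : apply key1 to both stages
  have hk1 : ∑ i, M.lam1 i * -∑ j, B i j * (Q.th1 i - Q.th1 j)
      = -∑ i, ∑ j, B i j * (M.lam1 i - M.lam1 j) * Q.th1 i := by
    rw [← key1 B hBsymm, ← Finset.sum_neg_distrib]
    exact Finset.sum_congr rfl fun i _ => by ring
  have hk2 : ∀ w : W, ∑ i, M.lam2 w i * -∑ j, B i j *
        ((Q.th2 w i - Q.th1 i) - (Q.th2 w j - Q.th1 j))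
      = -∑ i, ∑ j, B i j * (M.lam2 w i - M.lam2 w j) * (Q.th2 w i - Q.th1 i) := by
    intro w
    rw [← key1 B hBsymm (fun i => M.lam2 w i) (fun i => Q.th2 w i - Q.th1 i),
      ← Finset.sum_neg_distrib]
    exact Finset.sum_congr rfl fun i _ => by ring
  rw [hk1]
  simp_rw [hk2]
  -- step 4 : split the second-stage term and regroup the θ1 contributions
  have hsplitθ : ∀ w : W, (-∑ i, ∑ j, B i j * (M.lam2 w i - M.lam2 w j) * (Q.th2 w i - Q.th1 i))
      = (-∑ i, ∑ j, B i j * (M.lam2 w i - M.lam2 w j) * Q.th2 w i)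
        + ∑ i, ∑ j, B i j * (M.lam2 w i - M.lam2 w j) * Q.th1 i := by
    intro w
    have e : ∑ i, ∑ j, B i j * (M.lam2 w i - M.lam2 w j) * (Q.th2 w i - Q.th1 i)
        = (∑ i, ∑ j, B i j * (M.lam2 w i - M.lam2 w j) * Q.th2 w i)
          - ∑ i, ∑ j, B i j * (M.lam2 w i - M.lam2 w j) * Q.th1 i := by
      rw [← Finset.sum_sub_distrib]
      refine Finset.sum_congr rfl fun i _ => ?_
      rw [← Finset.sum_sub_distrib]
      exact Finset.sum_congr rfl fun j _ => by ring
    rw [e]; ring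
  simp_rw [hsplitθ, add_mul]
  rw [Finset.sum_add_distrib]
  -- name the two second-stage pieces
  have hA : (-∑ i, ∑ j, B i j * (M.lam1 i - M.lam1 j) * Q.th1 i)
      + ∑ w, (∑ i, ∑ j, B i j * (M.lam2 w i - M.lam2 w j) * Q.th1 i) * p w
      = ∑ i, ∑ j, M.gam1 i j * (B i j * (Q.th1 i - Q.th1 j)) := by
    have hw : ∑ w, (∑ i, ∑ j, B i j * (M.lam2 w i - M.lam2 w j) * Q.th1 i) * p w
        = ∑ i, ∑ j, (∑ w, B i j * (M.lam2 w i - M.lam2 w j) * p w) * Q.th1 i := by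
      simp_rw [Finset.sum_mul]
      rw [Finset.sum_comm]
      refine Finset.sum_congr rfl fun i _ => ?_
      rw [Finset.sum_comm]
      exact Finset.sum_congr rfl fun j _ => Finset.sum_congr rfl fun w _ => by ring
    rw [hw, ← key2 B hBsymm M.gam1 Q.th1]
    have comb : (-∑ i, ∑ j, B i j * (M.lam1 i - M.lam1 j) * Q.th1 i)
        + ∑ i, ∑ j, (∑ w, B i j * (M.lam2 w i - M.lam2 w j) * p w) * Q.th1 i
        = ∑ i, ((∑ j, (∑ w, B i j * (M.lam2 w i - M.lam2 w j) * p w) * Q.th1 i)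
            - ∑ j, B i j * (M.lam1 i - M.lam1 j) * Q.th1 i) := by
      rw [Finset.sum_sub_distrib]; ring
    rw [comb]
    refine Finset.sum_congr rfl fun i _ => ?_
    rw [← hsplit1 i]
    have e2 : Q.th1 i * -∑ j, B i j * (M.lam1 i - M.lam1 j
          - ∑ w, (M.lam2 w i - M.lam2 w j) * p w)
        = ∑ j, (Q.th1 i * -(B i j * (M.lam1 i - M.lam1 j
          - ∑ w, (M.lam2 w i - M.lam2 w j) * p w))) := by
      rw [← Finset.sum_neg_distrib, Finset.mul_sum]
    rw [e2, ← Finset.sum_sub_distrib]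
    refine Finset.sum_congr rfl fun j _ => ?_
    have hm : B i j * (∑ w, (M.lam2 w i - M.lam2 w j) * p w)
        = ∑ w, B i j * (M.lam2 w i - M.lam2 w j) * p w := by
      rw [Finset.mul_sum]; exact Finset.sum_congr rfl fun w _ => by ring
    linear_combination (-Q.th1 i) * hm
  have hB2 : ∀ w : W, -∑ i, ∑ j, B i j * (M.lam2 w i - M.lam2 w j) * Q.th2 w i
      = ∑ i, ∑ j, M.gam2 w i j * (B i j * (Q.th2 w i - Q.th2 w j)) := by
    intro w
    rw [← key2 B hBsymm (M.gam2 w) (Q.th2 w), ← Finset.sum_neg_distrib]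
    refine Finset.sum_congr rfl fun i _ => ?_
    have e3 : ∑ j, B i j * (M.lam2 w i - M.lam2 w j) * Q.th2 w i
        = Q.th2 w i * ∑ j, B i j * (M.lam2 w i - M.lam2 w j) := by
      rw [Finset.mul_sum]
      exact Finset.sum_congr rfl fun j _ => by ring
    rw [e3, ← hsplit2 w i]
    ring
  calc (-∑ i, ∑ j, B i j * (M.lam1 i - M.lam1 j) * Q.th1 i)
        + ((∑ w, (-∑ i, ∑ j, B i j * (M.lam2 w i - M.lam2 w j) * Q.th2 w i) * p w)
          + ∑ w, (∑ i, ∑ j, B i j * (M.lam2 w i - M.lam2 w j) * Q.th1 i) * p w)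
      = ((-∑ i, ∑ j, B i j * (M.lam1 i - M.lam1 j) * Q.th1 i)
          + ∑ w, (∑ i, ∑ j, B i j * (M.lam2 w i - M.lam2 w j) * Q.th1 i) * p w)
        + ∑ w, (-∑ i, ∑ j, B i j * (M.lam2 w i - M.lam2 w j) * Q.th2 w i) * p w := by ring
    _ = (∑ i, ∑ j, M.gam1 i j * (B i j * (Q.th1 i - Q.th1 j)))
        + ∑ w, (∑ i, ∑ j, M.gam2 w i j * (B i j * (Q.th2 w i - Q.th2 w j))) * p w := by
        rw [hA]
        congr 1
        exact Finset.sum_congr rfl fun w _ => by rw [hB2 w]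

/-- Theorem 4 (efficient Nash equilibrium under the monopoly-free condition):
if (SPP-U) has an optimal solution with KKT multipliers and at every node there are
either at least two generators or none, and either at least two LSEs or none, then the
bid profile in which every participant bids its nodal prices is an efficient Nash
equilibrium of the dynamic economic dispatch game: the optimal allocation solves (DED)
under these bids, and no generator or LSE can increase its payoff by a unilateral bid
deviation, at any primal–dual pair of the deviated (DED). -/
theorem efficient_nash_equilibrium_monopoly_free
    (nodeG : G → N) (nodeL : L → N) (B fmax : N → N → ℝ)
    (hBsymm : ∀ i j, B i j = B j i)
    (hfsymm : ∀ i j, fmax i j = fmax j i) (hfnonneg : ∀ i j, 0 ≤ fmax i j)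
    (p : W → ℝ) (hp : ∀ w, 0 < p w) (hpsum : ∑ w, p w = 1)
    (c1 c2 : G → ℝ → ℝ) (cdr cbo : L → ℝ → ℝ)
    (hA1 : Assumption1 c1 c2 cdr cbo)
    (D : L → ℝ) (hD : ∀ k, 0 ≤ D k)
    (ren : L → W → ℝ) (hren : ∀ k w, 0 ≤ ren k w)
    (hA2 : Assumption2 (W := W) (L := L) nodeG nodeL B fmax)
    -- monopoly-free condition
    (hmfG : ∀ i : N, (∃ k k' : G, k ≠ k' ∧ nodeG k = i ∧ nodeG k' = i)
        ∨ (∀ k : G, nodeG k ≠ i))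
    (hmfL : ∀ i : N, (∃ k k' : L, k ≠ k' ∧ nodeL k = i ∧ nodeL k' = i)
        ∨ (∀ k : L, nodeL k ≠ i))
    (Pstar : UPoint N G L W) (Mstar : UMult N W)
    -- (SPP-U) optimality of (y*, θ*)
    (hfeas : UFeasible nodeG nodeL B fmax Pstar)
    (hopt : ∀ Q : UPoint N G L W, UFeasible nodeG nodeL B fmax Q →
        UObj p c1 c2 cdr cbo D ren Q ≤ UObj p c1 c2 cdr cbo D ren Pstar)
    -- KKT multipliers
    (hKKT : UKKT nodeG nodeL B fmax p c1 c2 cdr cbo D ren Pstar Mstar) :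
    -- (y*, θ*) is optimal for (DED) under the efficient bid profile b*
    (∀ Q : UPoint N G L W, UFeasible nodeG nodeL B fmax Q →
        DEDObj p (effBids nodeG nodeL Mstar) Q ≤ DEDObj p (effBids nodeG nodeL Mstar) Pstar)
    -- no generator benefits from a unilateral deviation
    ∧ (∀ (k0 : G) (b' : Bids G L W), GenDeviation (effBids nodeG nodeL Mstar) b' k0 →
        ∀ (Q : UPoint N G L W) (M' : UMult N W),
          DEDKKT nodeG nodeL B fmax p b' Q M' →
          genPayoff nodeG p c1 c2 k0 Q M' ≤ genPayoff nodeG p c1 c2 k0 Pstar Mstar)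
    -- no LSE benefits from a unilateral deviation
    ∧ (∀ (k0 : L) (b' : Bids G L W), LSEDeviation (effBids nodeG nodeL Mstar) b' k0 →
        ∀ (Q : UPoint N G L W) (M' : UMult N W),
          DEDKKT nodeG nodeL B fmax p b' Q M' →
          lsePayoff nodeL p cdr cbo D ren k0 Q M'
            ≤ lsePayoff nodeL p cdr cbo D ren k0 Pstar Mstar) := by
  obtain ⟨hfeas', hg1, hg2, hdc1, hdc1e, hdc2, hdc2e, hlse, hstat1, hstat2, hcomp1, hcomp2⟩ := hKKT
  obtain ⟨hyG1, hyG2, hyL1, hyL2, hbal1, hbal2, hlim1, hlim2⟩ := hfeas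
  refine ⟨?_, ?_, ?_⟩
  · -- Part 1: DED optimality of Pstar
    intro Q hQ
    obtain ⟨qG1, qG2, qL1, qL2, qbal1, qbal2, qlim1, qlim2⟩ := hQ
    rw [dedobj_flow nodeG nodeL B hBsymm p Mstar hstat1 hstat2 Q qbal1 qbal2,
        dedobj_flow nodeG nodeL B hBsymm p Mstar hstat1 hstat2 Pstar hbal1 hbal2]
    have hterm1 : ∑ i, ∑ j, Mstar.gam1 i j * (B i j * (Q.th1 i - Q.th1 j))
        ≤ ∑ i, ∑ j, Mstar.gam1 i j * (B i j * (Pstar.th1 i - Pstar.th1 j)) := by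
      refine Finset.sum_le_sum fun i _ => Finset.sum_le_sum fun j _ => ?_
      have h1 : Mstar.gam1 i j * (B i j * (Q.th1 i - Q.th1 j)) ≤ Mstar.gam1 i j * fmax i j :=
        mul_le_mul_of_nonneg_left (qlim1 i j) (hg1 i j)
      have h2 : Mstar.gam1 i j * fmax i j
          = Mstar.gam1 i j * (B i j * (Pstar.th1 i - Pstar.th1 j)) := by
        linear_combination (-1 : ℝ) * hcomp1 i j
      linarith
    have hterm2 : ∀ w : W, ∑ i, ∑ j, Mstar.gam2 w i j * (B i j * (Q.th2 w i - Q.th2 w j))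
        ≤ ∑ i, ∑ j, Mstar.gam2 w i j * (B i j * (Pstar.th2 w i - Pstar.th2 w j)) := by
      intro w
      refine Finset.sum_le_sum fun i _ => Finset.sum_le_sum fun j _ => ?_
      have h1 : Mstar.gam2 w i j * (B i j * (Q.th2 w i - Q.th2 w j))
          ≤ Mstar.gam2 w i j * fmax i j :=
        mul_le_mul_of_nonneg_left (qlim2 w i j) (hg2 w i j)
      have h2 : Mstar.gam2 w i j * fmax i j
          = Mstar.gam2 w i j * (B i j * (Pstar.th2 w i - Pstar.th2 w j)) := by
        linear_combination (-1 : ℝ) * hcomp2 w i j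
      linarith
    exact add_le_add hterm1 (Finset.sum_le_sum fun w _ =>
      mul_le_mul_of_nonneg_right (hterm2 w) (hp w).le)
  · -- Part 2: no generator benefits from a unilateral deviation
    intro k0 b' hdev Q M' hKKT'
    obtain ⟨hnn, hGag1, hGag2, hbL1eq, hbL2eq⟩ := hdev
    obtain ⟨⟨qG1, qG2, qL1, qL2, _, _, _, _⟩, _, _, hG1le, _, hG2le, _, _, _, _, _, _, _, _, _⟩ :=
      hKKT'
    rcases hmfG (nodeG k0) with ⟨k, k', hkk', hk, hk'⟩ | hno
    · have hex : ∃ k1 : G, k1 ≠ k0 ∧ nodeG k1 = nodeG k0 := by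
        by_cases h : k = k0
        · refine ⟨k', fun hc => hkk' ?_, ?_⟩
          · rw [h, hc]
          · rw [hk', ← hk, h]
        · exact ⟨k, h, by rw [hk]⟩
      obtain ⟨k1, hk1ne, hk1node⟩ := hex
      have hlam1 : M'.lam1 (nodeG k0) ≤ Mstar.lam1 (nodeG k0) := by
        have h := hG1le k1
        have he := hGag1 k1 hk1ne
        simp only [effBids] at he
        rw [he, hk1node] at h
        exact h
      have hlam2 : ∀ w, M'.lam2 w (nodeG k0) ≤ Mstar.lam2 w (nodeG k0) := by
        intro w
        have h := hG2le k1 w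
        have he := hGag2 k1 w hk1ne
        simp only [effBids] at he
        rw [he, hk1node] at h
        exact h
      have step1 : genPayoff nodeG p c1 c2 k0 Q M'
          ≤ Mstar.lam1 (nodeG k0) * Q.yG1 k0 - c1 k0 (Q.yG1 k0)
            + ∑ w, (Mstar.lam2 w (nodeG k0) * Q.yG2 k0 w - c2 k0 (Q.yG2 k0 w)) * p w := by
        unfold genPayoff
        have h1 : M'.lam1 (nodeG k0) * Q.yG1 k0 ≤ Mstar.lam1 (nodeG k0) * Q.yG1 k0 :=
          mul_le_mul_of_nonneg_right hlam1 (qG1 k0)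
        have h2 : ∑ w, (M'.lam2 w (nodeG k0) * Q.yG2 k0 w - c2 k0 (Q.yG2 k0 w)) * p w
            ≤ ∑ w, (Mstar.lam2 w (nodeG k0) * Q.yG2 k0 w - c2 k0 (Q.yG2 k0 w)) * p w := by
          refine Finset.sum_le_sum fun w _ => mul_le_mul_of_nonneg_right ?_ (hp w).le
          have := mul_le_mul_of_nonneg_right (hlam2 w) (qG2 k0 w)
          linarith
        linarith
      have step2 : Mstar.lam1 (nodeG k0) * Q.yG1 k0 - c1 k0 (Q.yG1 k0)
            + ∑ w, (Mstar.lam2 w (nodeG k0) * Q.yG2 k0 w - c2 k0 (Q.yG2 k0 w)) * p w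
          ≤ genPayoff nodeG p c1 c2 k0 Pstar Mstar := by
        unfold genPayoff
        have h1 := producer_opt ((hA1.1 k0).1.convexOn) ((hA1.1 k0).2.2.1)
          (hyG1 k0) (qG1 k0) (hdc1 k0) (hdc1e k0)
        have h2 : ∑ w, (Mstar.lam2 w (nodeG k0) * Q.yG2 k0 w - c2 k0 (Q.yG2 k0 w)) * p w
            ≤ ∑ w, (Mstar.lam2 w (nodeG k0) * Pstar.yG2 k0 w - c2 k0 (Pstar.yG2 k0 w)) * p w := by
          refine Finset.sum_le_sum fun w _ => mul_le_mul_of_nonneg_right ?_ (hp w).le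
          exact producer_opt ((hA1.2.1 k0).1.convexOn) ((hA1.2.1 k0).2.2.1)
            (hyG2 k0 w) (qG2 k0 w) (hdc2 k0 w) (hdc2e k0 w)
        linarith
      linarith
    · exact absurd rfl (hno k0)
  · -- Part 3: no LSE benefits from a unilateral deviation
    intro k0 b' hdev Q M' hKKT'
    obtain ⟨hnn, hLag1, hLag2, hbG1eq, hbG2eq⟩ := hdev
    obtain ⟨⟨qG1, qG2, qL1, qL2, _, _, _, _⟩, _, _, _, _, _, _, hL1le, _, hL2le, _, _, _, _, _⟩ :=
      hKKT'
    rcases hmfL (nodeL k0) with ⟨k, k', hkk', hk, hk'⟩ | hno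
    · have hex : ∃ k1 : L, k1 ≠ k0 ∧ nodeL k1 = nodeL k0 := by
        by_cases h : k = k0
        · refine ⟨k', fun hc => hkk' ?_, ?_⟩
          · rw [h, hc]
          · rw [hk', ← hk, h]
        · exact ⟨k, h, by rw [hk]⟩
      obtain ⟨k1, hk1ne, hk1node⟩ := hex
      have hlam1 : Mstar.lam1 (nodeL k0) ≤ M'.lam1 (nodeL k0) := by
        have h := hL1le k1
        have he := hLag1 k1 hk1ne
        simp only [effBids] at he
        rw [he, hk1node] at h
        exact h
      have hlam2 : ∀ w, Mstar.lam2 w (nodeL k0) ≤ M'.lam2 w (nodeL k0) := by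
        intro w
        have h := hL2le k1 w
        have he := hLag2 k1 w hk1ne
        simp only [effBids] at he
        rw [he, hk1node] at h
        exact h
      obtain ⟨g, hsg, hgle, hgeq, hg2le, hg2eq⟩ := hlse k0
      have step1 : lsePayoff nodeL p cdr cbo D ren k0 Q M'
          ≤ -(Mstar.lam1 (nodeL k0)) * Q.yL1 k0
            + ∑ w, (uVal (cdr k0) (cbo k0) (D k0) (ren k0 w) (Q.yL1 k0 + Q.yL2 k0 w)
                - Mstar.lam2 w (nodeL k0) * Q.yL2 k0 w) * p w := by
        unfold lsePayoff
        have h1 : -(M'.lam1 (nodeL k0)) * Q.yL1 k0 ≤ -(Mstar.lam1 (nodeL k0)) * Q.yL1 k0 := by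
          have := mul_le_mul_of_nonneg_right hlam1 (qL1 k0); linarith
        have h2 : ∑ w, (uVal (cdr k0) (cbo k0) (D k0) (ren k0 w) (Q.yL1 k0 + Q.yL2 k0 w)
                - M'.lam2 w (nodeL k0) * Q.yL2 k0 w) * p w
            ≤ ∑ w, (uVal (cdr k0) (cbo k0) (D k0) (ren k0 w) (Q.yL1 k0 + Q.yL2 k0 w)
                - Mstar.lam2 w (nodeL k0) * Q.yL2 k0 w) * p w := by
          refine Finset.sum_le_sum fun w _ => mul_le_mul_of_nonneg_right ?_ (hp w).le
          have := mul_le_mul_of_nonneg_right (hlam2 w) (qL2 k0 w)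
          linarith
        linarith
      have hw : ∀ w : W, uVal (cdr k0) (cbo k0) (D k0) (ren k0 w) (Q.yL1 k0 + Q.yL2 k0 w)
            - Mstar.lam2 w (nodeL k0) * Q.yL2 k0 w
          ≤ uVal (cdr k0) (cbo k0) (D k0) (ren k0 w) (Pstar.yL1 k0 + Pstar.yL2 k0 w)
            - Mstar.lam2 w (nodeL k0) * Pstar.yL2 k0 w
            + g w * (Q.yL1 k0 - Pstar.yL1 k0) := by
        intro w
        have h := hsg w (Q.yL1 k0 + Q.yL2 k0 w)
        have hterm : (g w - Mstar.lam2 w (nodeL k0)) * (Q.yL2 k0 w - Pstar.yL2 k0 w) ≤ 0 := by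
          rcases eq_or_lt_of_le (hyL2 k0 w) with hz | hz
          · have hq := qL2 k0 w
            have := hg2le w
            nlinarith [this, hq, hz]
          · rw [hg2eq w hz]
            simp
        nlinarith [h, hterm]
      have hsum : ∑ w, (uVal (cdr k0) (cbo k0) (D k0) (ren k0 w) (Q.yL1 k0 + Q.yL2 k0 w)
              - Mstar.lam2 w (nodeL k0) * Q.yL2 k0 w) * p w
          ≤ (∑ w, (uVal (cdr k0) (cbo k0) (D k0) (ren k0 w) (Pstar.yL1 k0 + Pstar.yL2 k0 w)
              - Mstar.lam2 w (nodeL k0) * Pstar.yL2 k0 w) * p w)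
            + (∑ w, g w * p w) * (Q.yL1 k0 - Pstar.yL1 k0) := by
        have h1 : ∑ w, (uVal (cdr k0) (cbo k0) (D k0) (ren k0 w) (Q.yL1 k0 + Q.yL2 k0 w)
              - Mstar.lam2 w (nodeL k0) * Q.yL2 k0 w) * p w
            ≤ ∑ w, (uVal (cdr k0) (cbo k0) (D k0) (ren k0 w) (Pstar.yL1 k0 + Pstar.yL2 k0 w)
              - Mstar.lam2 w (nodeL k0) * Pstar.yL2 k0 w
              + g w * (Q.yL1 k0 - Pstar.yL1 k0)) * p w :=
          Finset.sum_le_sum fun w _ => mul_le_mul_of_nonneg_right (hw w) (hp w).le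
        have h2 : ∑ w, (uVal (cdr k0) (cbo k0) (D k0) (ren k0 w) (Pstar.yL1 k0 + Pstar.yL2 k0 w)
              - Mstar.lam2 w (nodeL k0) * Pstar.yL2 k0 w
              + g w * (Q.yL1 k0 - Pstar.yL1 k0)) * p w
            = (∑ w, (uVal (cdr k0) (cbo k0) (D k0) (ren k0 w) (Pstar.yL1 k0 + Pstar.yL2 k0 w)
              - Mstar.lam2 w (nodeL k0) * Pstar.yL2 k0 w) * p w)
              + (∑ w, g w * p w) * (Q.yL1 k0 - Pstar.yL1 k0) := by
          rw [Finset.sum_mul, ← Finset.sum_add_distrib]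
          exact Finset.sum_congr rfl fun w _ => by ring
        linarith
      have hfin : -(Mstar.lam1 (nodeL k0)) * Q.yL1 k0
            + (∑ w, g w * p w) * (Q.yL1 k0 - Pstar.yL1 k0)
          ≤ -(Mstar.lam1 (nodeL k0)) * Pstar.yL1 k0 := by
        rcases eq_or_lt_of_le (hyL1 k0) with hz | hz
        · have hq := qL1 k0
          nlinarith [hgle, hq, hz]
        · rw [← hgeq hz]
          ring_nf
          nlinarith [hgeq hz]
      have : lsePayoff nodeL p cdr cbo D ren k0 Pstar Mstar
          = -(Mstar.lam1 (nodeL k0)) * Pstar.yL1 k0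
            + ∑ w, (uVal (cdr k0) (cbo k0) (D k0) (ren k0 w) (Pstar.yL1 k0 + Pstar.yL2 k0 w)
                - Mstar.lam2 w (nodeL k0) * Pstar.yL2 k0 w) * p w := rfl
      linarith [step1, hsum, hfin, this.ge]
    · exact absurd rfl (hno k0)
end
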